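/- arXiv:2207.05904 — 7 statements merged into one kernel-verified Lean document; each statement's English description precedes it below -/
import Mathlib

section
/- For all integers r ≥ 1 and g ≥ 5, every (r,1,g)-graph has at least Σ_{i=0}^{g-1} n(r, min(i, g-1-i)) vertices, where n(r,d) = 1 + r·Σ_{i=0}^{d-1} (r-1)^i is the Moore bound for an r-regular undirected graph of diameter d (with n(r,0)=1). -/
/-- A mixed graph: a set of undirected edges (a symmetric irreflexive relation)
together with a set of directed arcs (an irreflexive relation), with no loops.
Since edges and arcs are given by relations, there are no repeated edges or arcs. -/
structure MixedGraph (V : Type*) where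
  Edge : V → V → Prop
  Arc : V → V → Prop
  edge_symm : ∀ {u v}, Edge u v → Edge v u
  edge_irrefl : ∀ v, ¬ Edge v v
  arc_irrefl : ∀ v, ¬ Arc v v

/-- A cycle of length `len ≥ 1` in a mixed graph: a cyclic sequence of vertices
`vert : ZMod len → V` where each consecutive pair `(vert i, vert (i+1))` is joined
either by an arc from `vert i` to `vert (i+1)` (when `useArc i = true`) or by an
undirected edge (when `useArc i = false`), and no edge or arc is used more than once. -/
structure MixedCycle {V : Type*} (G : MixedGraph V) where
  len : ℕ
  len_pos : 0 < len
  vert : ZMod len → V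
  useArc : ZMod len → Bool
  step_arc : ∀ i, useArc i = true → G.Arc (vert i) (vert (i + 1))
  step_edge : ∀ i, useArc i = false → G.Edge (vert i) (vert (i + 1))
  arc_once : ∀ i j, useArc i = true → useArc j = true →
    vert i = vert j → vert (i + 1) = vert (j + 1) → i = j
  edge_once : ∀ i j, useArc i = false → useArc j = false →
    ((vert i = vert j ∧ vert (i + 1) = vert (j + 1)) ∨
      (vert i = vert (j + 1) ∧ vert (i + 1) = vert j)) → i = j

/-- A mixed graph has girth `g` if it has a cycle of length `g` and no shorter cycle. -/
def MixedGraph.HasGirth {V : Type*} (G : MixedGraph V) (g : ℕ) : Prop :=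
  (∃ c : MixedCycle G, c.len = g) ∧ ∀ c : MixedCycle G, g ≤ c.len

/-- An `(r,z,g)`-graph: every vertex is incident with exactly `r` undirected edges,
every vertex has out-degree exactly `z`, and the girth is `g`. -/
def IsMixedRZG {V : Type*} (G : MixedGraph V) (r z g : ℕ) : Prop :=
  (∀ v, Nat.card {u | G.Edge v u} = r) ∧
  (∀ v, Nat.card {u | G.Arc v u} = z) ∧
  G.HasGirth g

/-- The Moore bound `n(r,d) = 1 + r * (1 + (r-1) + ... + (r-1)^(d-1))`. -/
def mooreBound (r d : ℕ) : ℕ := 1 + r * ∑ i ∈ Finset.range d, (r - 1) ^ i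

namespace AHMaux

variable {V : Type*} {G : MixedGraph V}

lemma seq_cycle (L : ℕ) (hL : 0 < L) (w : ℕ → V) (b : ℕ → Bool)
    (hwL : w L = w 0)
    (hstepA : ∀ k, k < L → b k = true → G.Arc (w k) (w (k+1)))
    (hstepE : ∀ k, k < L → b k = false → G.Edge (w k) (w (k+1)))
    (harc : ∀ k l, k < L → l < L → b k = true → b l = true → w k = w l → k = l)
    (hedge : ∀ k l, k < L → l < L → b k = false → b l = false →
      ((w k = w l ∧ w (k+1) = w (l+1)) ∨ (w k = w (l+1) ∧ w (k+1) = w l)) → k = l) :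
    ∃ c : MixedCycle G, c.len = L := by
  haveI : NeZero L := ⟨hL.ne'⟩
  have hsucc : ∀ i : ZMod L, w ((i + 1).val) = w (i.val + 1) := by
    intro i
    have h1 : (i + 1).val = (i.val + 1) % L := by
      rw [ZMod.val_add, ZMod.val_one_eq_one_mod]
      conv_rhs => rw [Nat.add_mod]
      rw [Nat.mod_eq_of_lt (ZMod.val_lt i)]
    rcases Nat.lt_or_ge (i.val + 1) L with h | h
    · rw [h1, Nat.mod_eq_of_lt h]
    · have h2 : i.val + 1 = L := by have := ZMod.val_lt i; omega
      rw [h1, h2, Nat.mod_self, ← hwL]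
  refine ⟨⟨L, hL, fun i => w i.val, fun i => b i.val, ?_, ?_, ?_, ?_⟩, rfl⟩
  · intro i hi
    simpa [hsucc i] using hstepA i.val (ZMod.val_lt i) hi
  · intro i hi
    simpa [hsucc i] using hstepE i.val (ZMod.val_lt i) hi
  · intro i j hi hj hv _
    exact ZMod.val_injective L (harc i.val j.val (ZMod.val_lt i) (ZMod.val_lt j) hi hj hv)
  · intro i j hi hj hor
    simp only [hsucc i, hsucc j] at hor
    exact ZMod.val_injective L
      (hedge i.val j.val (ZMod.val_lt i) (ZMod.val_lt j) hi hj hor)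

lemma no_short_edge_cycle {g : ℕ} (hgirth : ∀ c : MixedCycle G, g ≤ c.len)
    (L : ℕ) (hL3 : 3 ≤ L) (hLg : L < g) (w : ℕ → V)
    (hinj : ∀ a b, a < L → b < L → w a = w b → a = b) (hwL : w L = w 0)
    (hstep : ∀ k, k < L → G.Edge (w k) (w (k+1))) : False := by
  have hnorm : ∀ a, a < L → w (a+1) = w ((a+1) % L) := by
    intro a ha
    rcases Nat.lt_or_ge (a+1) L with h | h
    · rw [Nat.mod_eq_of_lt h]
    · have h2 : a + 1 = L := by omega
      rw [h2, Nat.mod_self, hwL]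
  obtain ⟨c, hc⟩ := seq_cycle (G := G) L (by omega) w (fun _ => false) hwL
    (fun k _ h => by simp at h) (fun k hk _ => hstep k hk)
    (fun k l _ _ h => by simp at h)
    (by
      intro k l hk hl _ _ hor
      rcases hor with ⟨h1, _⟩ | ⟨h1, h2⟩
      · exact hinj k l hk hl h1
      · rw [hnorm l hl] at h1
        rw [hnorm k hk] at h2
        have e1 := hinj k ((l+1) % L) hk (Nat.mod_lt _ (by omega)) h1
        have e2 := hinj ((k+1) % L) l (Nat.mod_lt _ (by omega)) hl h2
        rcases Nat.lt_or_ge (l+1) L with h | h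
        · rw [Nat.mod_eq_of_lt h] at e1
          rcases Nat.lt_or_ge (k+1) L with h' | h'
          · rw [Nat.mod_eq_of_lt h'] at e2; omega
          · have hk1 : k + 1 = L := by omega
            rw [hk1, Nat.mod_self] at e2
            omega
        · have hl1 : l + 1 = L := by omega
          rw [hl1, Nat.mod_self] at e1
          rcases Nat.lt_or_ge (k+1) L with h' | h'
          · rw [Nat.mod_eq_of_lt h'] at e2; omega
          · omega)
  have := hgirth c
  omega


def IsWalk (G : MixedGraph V) (x y : V) (t : ℕ) (p : ℕ → V) : Prop :=
  p 0 = x ∧ p t = y ∧ ∀ k, k < t → G.Edge (p k) (p (k+1))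

def IsPath (G : MixedGraph V) (x y : V) (t : ℕ) (p : ℕ → V) : Prop :=
  IsWalk G x y t p ∧ ∀ a b, a ≤ t → b ≤ t → p a = p b → a = b

lemma IsWalk.rev {x y : V} {t : ℕ} {p : ℕ → V} (h : IsWalk G x y t p) :
    IsWalk G y x t (fun a => p (t - a)) := by
  obtain ⟨h0, ht, he⟩ := h
  refine ⟨by simpa using ht, by simpa using h0, ?_⟩
  intro k hk
  show G.Edge (p (t - k)) (p (t - (k+1)))
  have h1 : t - k = (t - (k+1)) + 1 := by omega
  rw [h1]
  exact G.edge_symm (he (t - (k+1)) (by omega))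

lemma IsWalk.concat {x y z : V} {s t : ℕ} {p q : ℕ → V}
    (h1 : IsWalk G x y s p) (h2 : IsWalk G y z t q) :
    IsWalk G x z (s+t) (fun a => if a ≤ s then p a else q (a - s)) := by
  obtain ⟨hp0, hps, hpe⟩ := h1
  obtain ⟨hq0, hqt, hqe⟩ := h2
  refine ⟨by simpa using hp0, ?_, ?_⟩
  · show (if s + t ≤ s then p (s+t) else q (s + t - s)) = z
    rcases Nat.eq_zero_or_pos t with ht0 | ht0
    · subst ht0
      simp only [Nat.add_zero, le_refl, if_pos]
      rw [hps, ← hq0]; simpa using hqt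
    · rw [if_neg (by omega)]
      simpa using hqt
  · intro k hk
    show G.Edge (if k ≤ s then p k else q (k - s)) (if k + 1 ≤ s then p (k+1) else q (k + 1 - s))
    rcases Nat.lt_or_ge k s with h | h
    · rw [if_pos (by omega), if_pos (by omega)]
      exact hpe k h
    · rcases Nat.eq_or_lt_of_le h with h' | h'
      · subst h'
        rw [if_pos le_rfl, if_neg (by omega), hps, ← hq0]
        simpa using hqe 0 (by omega)
      · rw [if_neg (by omega), if_neg (by omega)]
        have : k + 1 - s = (k - s) + 1 := by omega
        rw [this]
        exact hqe (k - s) (by omega)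

lemma exists_path_of_walk {x y : V} :
    ∀ t : ℕ, ∀ p : ℕ → V, IsWalk G x y t p → ∃ t' q, t' ≤ t ∧ IsPath G x y t' q := by
  intro t
  induction t using Nat.strong_induction_on with
  | _ t ih =>
    intro p hw
    by_cases hinj : ∀ a b, a ≤ t → b ≤ t → p a = p b → a = b
    · exact ⟨t, p, le_rfl, hw, hinj⟩
    · push_neg at hinj
      obtain ⟨a', b', ha', hb', heq', hne'⟩ := hinj
      obtain ⟨a, b, ha, hb, hab, heq⟩ :
          ∃ a b, a ≤ t ∧ b ≤ t ∧ a < b ∧ p a = p b := by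
        rcases Nat.lt_or_ge a' b' with h | h
        · exact ⟨a', b', ha', hb', h, heq'⟩
        · exact ⟨b', a', hb', ha', by omega, heq'.symm⟩
      obtain ⟨hp0, hpt, hpe⟩ := hw
      set t2 := t - (b - a) with ht2
      have hw2 : IsWalk G x y t2 (fun k => if k ≤ a then p k else p (k + (b - a))) := by
        refine ⟨by simpa using hp0, ?_, ?_⟩
        · show (if t2 ≤ a then p t2 else p (t2 + (b - a))) = y
          rcases Nat.lt_or_ge a t2 with h | h
          · rw [if_neg (by omega)]
            have : t2 + (b - a) = t := by omega
            rw [this]; exact hpt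
          · have hbt : b = t := by omega
            have ht2a : t2 = a := by omega
            rw [if_pos (by omega), ht2a, heq, hbt]; exact hpt
        · intro k hk
          show G.Edge (if k ≤ a then p k else p (k + (b - a)))
            (if k + 1 ≤ a then p (k+1) else p (k + 1 + (b - a)))
          rcases Nat.lt_or_ge k a with h | h
          · rw [if_pos (by omega), if_pos (by omega)]
            exact hpe k (by omega)
          · rcases Nat.eq_or_lt_of_le h with h' | h'
            · rw [if_pos (by omega), if_neg (by omega)]
              have e0 : p k = p b := by rw [← h']; exact heq
              rw [e0]
              have e1 : k + 1 + (b - a) = b + 1 := by omega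
              rw [e1]
              exact hpe b (by omega)
            · rw [if_neg (by omega), if_neg (by omega)]
              have : k + 1 + (b - a) = (k + (b - a)) + 1 := by omega
              rw [this]
              exact hpe (k + (b - a)) (by omega)
      obtain ⟨t', q, hle, hq⟩ := ih t2 (by omega) _ hw2
      exact ⟨t', q, by omega, hq⟩

lemma path_unique {g : ℕ} (hgirth : ∀ c : MixedCycle G, g ≤ c.len)
    {c y : V} {s t : ℕ} {p q : ℕ → V} (hst : s + t < g)
    (hp : IsPath G c y s p) (hq : IsPath G c y t q) :
    s = t ∧ ∀ a, a ≤ s → p a = q a := by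
  classical
  obtain ⟨⟨hp0, hps, hpe⟩, hpinj⟩ := hp
  obtain ⟨⟨hq0, hqt, hqe⟩, hqinj⟩ := hq
  by_cases hagree : ∀ a, a ≤ min s t → p a = q a
  · rcases Nat.lt_trichotomy s t with h | h | h
    · exfalso
      have h1 : p s = q s := hagree s (by omega)
      have h2 : q s = q t := by rw [← h1, hps, hqt]
      exact absurd (hqinj s t (by omega) le_rfl h2) (by omega)
    · exact ⟨h, fun a ha => hagree a (by omega)⟩
    · exfalso
      have h1 : p t = q t := hagree t (by omega)
      have h2 : p s = p t := by rw [hps, ← hqt, h1]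
      exact absurd (hpinj s t le_rfl (by omega) h2) (by omega)
  · exfalso
    push_neg at hagree
    have hex : ∃ a, a ≤ min s t ∧ p a ≠ q a := hagree
    obtain ⟨hKle, hKne⟩ := Nat.find_spec hex
    set K := Nat.find hex with hKdef
    have hKpos : 0 < K := by
      rcases Nat.eq_zero_or_pos K with h | h
      · exfalso; apply hKne; rw [h, hp0, hq0]
      · exact h
    set k := K - 1 with hkdef
    have hkagree : ∀ a, a ≤ k → p a = q a := by
      intro a ha
      by_contra hne
      exact Nat.find_min hex (m := a) (by omega) ⟨by omega, hne⟩
    have hkdiv : p (k+1) ≠ q (k+1) := by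
      have hKk : k + 1 = K := by omega
      rw [hKk]; exact hKne
    have hkst : k + 1 ≤ min s t := by omega
    have hex2 : ∃ j, (k < j ∧ j ≤ s) ∧ ∃ l, k < l ∧ l ≤ t ∧ p j = q l :=
      ⟨s, ⟨by omega, le_rfl⟩, t, by omega, le_rfl, by rw [hps, hqt]⟩
    obtain ⟨⟨hJk, hJs⟩, l, hlk, hlt, hJl⟩ := Nat.find_spec hex2
    set J := Nat.find hex2 with hJdef
    set L := (J - k) + (l - k) with hLdef
    have hL3 : 3 ≤ L := by
      by_contra h
      have hJ : J = k + 1 := by omega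
      have hl : l = k + 1 := by omega
      apply hkdiv
      rw [hJ] at hJl
      rw [hl] at hJl
      exact hJl
    set w : ℕ → V := fun a => if a ≤ J - k then p (k + a) else q (k + (L - a)) with hwdef
    have hwL : w L = w 0 := by
      show (if L ≤ J - k then p (k + L) else q (k + (L - L))) =
        (if 0 ≤ J - k then p (k + 0) else q (k + (L - 0)))
      rw [if_neg (by omega), if_pos (by omega)]
      simp only [Nat.sub_self, Nat.add_zero]
      exact (hkagree k le_rfl).symm
    -- mixed-index equality is impossible
    have hmix : ∀ a b, a < L → b < L → a ≤ J - k → ¬ (b ≤ J - k) → p (k + a) = q (k + (L - b)) → False := by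
      intro a b haL hbL ha hb heq
      have hbrange : k < k + (L - b) ∧ k + (L - b) < l := by omega
      rcases Nat.eq_or_lt_of_le ha with h' | h'
      · -- k + a = J
        have : q l = q (k + (L - b)) := by
          rw [← hJl]
          have : k + a = J := by omega
          rw [← this]; exact heq
        have := hqinj l (k + (L - b)) hlt (by omega) this
        omega
      · rcases Nat.eq_zero_or_pos a with h0 | h0
        · subst h0
          have h1 : q k = q (k + (L - b)) := by
            rw [← hkagree k le_rfl]
            simpa using heq
          have := hqinj k (k + (L - b)) (by omega) (by omega) h1
          omega
        · -- k < k + a < J contradicts minimality of J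
          exact Nat.find_min hex2 (m := k + a) (by omega)
            ⟨⟨by omega, by omega⟩, k + (L - b), by omega, by omega, heq⟩
    have hinj : ∀ a b, a < L → b < L → w a = w b → a = b := by
      intro a b haL hbL heq
      by_cases ha : a ≤ J - k <;> by_cases hb : b ≤ J - k
      · simp only [hwdef, if_pos ha, if_pos hb] at heq
        have := hpinj (k + a) (k + b) (by omega) (by omega) heq
        omega
      · exact absurd heq (fun h => hmix a b haL hbL ha hb (by
          simpa [hwdef, if_pos ha, if_neg hb] using h))
      · exact absurd heq (fun h => hmix b a hbL haL hb ha (by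
          simpa [hwdef, if_pos hb, if_neg ha] using h.symm))
      · simp only [hwdef, if_neg ha, if_neg hb] at heq
        have := hqinj (k + (L - a)) (k + (L - b)) (by omega) (by omega) heq
        omega
    have hstep : ∀ m, m < L → G.Edge (w m) (w (m+1)) := by
      intro m hm
      rcases Nat.lt_or_ge (m+1) (J - k + 1) with h | h
      · -- m + 1 ≤ J - k
        simp only [hwdef]
        simp only [if_pos (show m ≤ J - k by omega), if_pos (show m + 1 ≤ J - k by omega)]
        have : k + (m + 1) = (k + m) + 1 := by omega
        rw [this]
        exact hpe (k + m) (by omega)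
      · rcases Nat.eq_or_lt_of_le h with h' | h'
        · -- m = J - k
          have hmJ : m = J - k := by omega
          simp only [hwdef]
          simp only [if_pos (show m ≤ J - k by omega), if_neg (show ¬ (m + 1 ≤ J - k) by omega)]
          have e1 : k + m = J := by omega
          have e2 : k + (L - (m+1)) = l - 1 := by omega
          rw [e1, e2, hJl]
          have e3 : l = (l - 1) + 1 := by omega
          rw [e3]
          exact G.edge_symm (hqe (l - 1) (by omega))
        · -- m > J - k
          simp only [hwdef]
          simp only [if_neg (show ¬ (m ≤ J - k) by omega), if_neg (show ¬ (m + 1 ≤ J - k) by omega)]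
          have e1 : k + (L - m) = (k + (L - (m+1))) + 1 := by omega
          rw [e1]
          exact G.edge_symm (hqe (k + (L - (m+1))) (by omega))
    exact no_short_edge_cycle hgirth L hL3 (by omega) w hinj hwL hstep

lemma not_on_path {g : ℕ} (hgirth : ∀ c : MixedCycle G, g ≤ c.len)
    {c u x : V} {t : ℕ} (ht : 1 ≤ t) (htg : t + 1 < g)
    {p : ℕ → V} (hp : IsPath G c u t p) (hx : G.Edge u x) (hxprev : x ≠ p (t-1)) :
    ∀ a, a ≤ t → x ≠ p a := by
  intro a ha hxa
  obtain ⟨⟨hp0, hpt, hpe⟩, hpinj⟩ := hp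
  have hat : a ≠ t := by
    rintro rfl
    apply G.edge_irrefl u
    rw [hxa, hpt] at hx
    exact hx
  have hat1 : a ≠ t - 1 := fun h => hxprev (h ▸ hxa)
  have ha2 : a + 2 ≤ t := by omega
  set L := t - a + 1 with hLdef
  set w : ℕ → V := fun m => if m ≤ t - a then p (a + m) else p a with hwdef
  apply no_short_edge_cycle hgirth L (by omega) (by omega) w
  · intro a' b' ha' hb' heq
    rw [hwdef] at heq
    simp only [if_pos (show a' ≤ t - a by omega), if_pos (show b' ≤ t - a by omega)] at heq
    have := hpinj (a + a') (a + b') (by omega) (by omega) heq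
    omega
  · show (if L ≤ t - a then p (a + L) else p a) = (if 0 ≤ t - a then p (a + 0) else p a)
    rw [if_neg (by omega), if_pos (by omega), Nat.add_zero]
  · intro m hm
    rcases Nat.lt_or_ge (m + 1) L with h | h
    · simp only [hwdef]
      simp only [if_pos (show m ≤ t - a by omega), if_pos (show m + 1 ≤ t - a by omega)]
      have : a + (m + 1) = (a + m) + 1 := by omega
      rw [this]
      exact hpe (a + m) (by omega)
    · have hmL : m + 1 = L := by omega
      simp only [hwdef]
      simp only [if_pos (show m ≤ t - a by omega), if_neg (show ¬ (m + 1 ≤ t - a) by omega)]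
      have e1 : a + m = t := by omega
      rw [e1, hpt, ← hxa]
      exact hx


def mooreBound' (r d : ℕ) : ℕ := 1 + r * ∑ i ∈ Finset.range d, (r - 1) ^ i

def sphere (G : MixedGraph V) (c : V) (t : ℕ) : Set V := {y | ∃ p, IsPath G c y t p}

def ball (G : MixedGraph V) (c : V) (d : ℕ) : Set V := {y | ∃ t, t ≤ d ∧ y ∈ sphere G c t}

lemma sphere_zero (c : V) : sphere G c 0 = {c} := by
  ext y
  constructor
  · rintro ⟨p, ⟨⟨hp0, hpt, _⟩, _⟩⟩
    simp only [Set.mem_singleton_iff]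
    rw [← hpt, hp0]
  · intro h
    rw [Set.mem_singleton_iff] at h
    subst h
    exact ⟨fun _ => y, ⟨rfl, rfl, fun k hk => absurd hk (by omega)⟩, fun a b ha hb _ => by omega⟩

lemma sphere_one (c : V) : sphere G c 1 = {y | G.Edge c y} := by
  ext y
  constructor
  · rintro ⟨p, ⟨⟨hp0, hpt, hpe⟩, _⟩⟩
    have h := hpe 0 (by omega)
    rw [hp0, hpt] at h
    exact h
  · intro h
    have hcy : c ≠ y := by rintro rfl; exact G.edge_irrefl c h
    refine ⟨fun k => if k = 0 then c else y, ⟨if_pos rfl, if_neg one_ne_zero, ?_⟩, ?_⟩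
    · intro k hk
      have hk0 : k = 0 := by omega
      subst hk0
      simpa using h
    · intro a b ha hb heq
      rcases Nat.le_one_iff_eq_zero_or_eq_one.mp ha with rfl | rfl <;>
        rcases Nat.le_one_iff_eq_zero_or_eq_one.mp hb with rfl | rfl <;> simp_all

variable [Fintype V]

lemma sphere_succ_ncard {g r : ℕ} (hgirth : ∀ c : MixedCycle G, g ≤ c.len)
    (hreg : ∀ v, Nat.card {u | G.Edge v u} = r)
    (c : V) (t : ℕ) (ht : 1 ≤ t) (htg : 2 * (t + 1) < g) :
    (r - 1) * (sphere G c t).ncard ≤ (sphere G c (t+1)).ncard := by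
  classical
  have hch : ∀ u : V, ∃ p, u ∈ sphere G c t → IsPath G c u t p := by
    intro u
    by_cases hu : u ∈ sphere G c t
    · obtain ⟨p, hp⟩ := hu
      exact ⟨p, fun _ => hp⟩
    · exact ⟨fun _ => u, fun h => absurd h hu⟩
  choose P hPspec using hch
  set N : V → Set V := fun u => {x | G.Edge u x ∧ ∀ a, a ≤ t → x ≠ P u a} with hN
  -- the extension path
  set Q : V → V → ℕ → V := fun u x a => if a ≤ t then P u a else x with hQ
  have hQpath : ∀ u ∈ sphere G c t, ∀ x ∈ N u, IsPath G c x (t+1) (Q u x) := by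
    intro u hu x hx
    obtain ⟨⟨hp0, hpt, hpe⟩, hpinj⟩ := hPspec u hu
    obtain ⟨hx1, hx2⟩ := hx
    refine ⟨⟨?_, ?_, ?_⟩, ?_⟩
    · simp only [hQ, if_pos (by omega : (0:ℕ) ≤ t)]
      exact hp0
    · simp only [hQ, if_neg (by omega : ¬ (t + 1 ≤ t))]
    · intro k hk
      rcases Nat.lt_or_ge k t with h | h
      · simp only [hQ, if_pos (by omega : k ≤ t), if_pos (by omega : k + 1 ≤ t)]
        exact hpe k h
      · have hkt : k = t := by omega
        subst hkt
        simp only [hQ, if_pos le_rfl, if_neg (by omega : ¬ (k + 1 ≤ k))]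
        rw [hpt]
        exact hx1
    · intro a b ha hb heq
      rcases Nat.lt_or_ge a (t+1) with ha' | ha' <;> rcases Nat.lt_or_ge b (t+1) with hb' | hb'
      · simp only [hQ, if_pos (by omega : a ≤ t), if_pos (by omega : b ≤ t)] at heq
        exact hpinj a b (by omega) (by omega) heq
      · have hb1 : b = t + 1 := by omega
        subst hb1
        simp only [hQ, if_pos (by omega : a ≤ t), if_neg (by omega : ¬ (t + 1 ≤ t))] at heq
        exact absurd heq.symm (hx2 a (by omega))
      · have ha1 : a = t + 1 := by omega
        subst ha1
        simp only [hQ, if_pos (by omega : b ≤ t), if_neg (by omega : ¬ (t + 1 ≤ t))] at heq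
        exact absurd heq (hx2 b (by omega))
      · omega
  have hNsub : ∀ u ∈ sphere G c t, N u ⊆ sphere G c (t+1) := by
    intro u hu x hx
    exact ⟨Q u x, hQpath u hu x hx⟩
  have hNcard : ∀ u ∈ sphere G c t, r - 1 ≤ (N u).ncard := by
    intro u hu
    obtain ⟨⟨hp0, hpt, hpe⟩, hpinj⟩ := hPspec u hu
    have hsub : {x | G.Edge u x} ⊆ N u ∪ {P u (t-1)} := by
      intro x hx
      by_cases hxe : x = P u (t-1)
      · right; exact hxe
      · left
        exact ⟨hx, fun a ha => not_on_path hgirth ht (by omega) ⟨⟨hp0, hpt, hpe⟩, hpinj⟩ hx hxe a ha⟩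
    have h1 : ({x | G.Edge u x}).ncard ≤ (N u).ncard + 1 := by
      calc ({x | G.Edge u x}).ncard ≤ (N u ∪ {P u (t-1)}).ncard :=
            Set.ncard_le_ncard hsub (Set.toFinite _)
        _ ≤ (N u).ncard + ({P u (t-1)} : Set V).ncard := Set.ncard_union_le _ _
        _ = (N u).ncard + 1 := by rw [Set.ncard_singleton]
    have h2 : ({x | G.Edge u x}).ncard = r := by
      rw [← Nat.card_coe_set_eq]
      exact hreg u
    omega
  have hNdisj : ∀ u ∈ sphere G c t, ∀ u' ∈ sphere G c t, u ≠ u' → Disjoint (N u) (N u') := by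
    intro u hu u' hu' hne
    rw [Set.disjoint_left]
    intro x hx hx'
    apply hne
    have h1 := hQpath u hu x hx
    have h2 := hQpath u' hu' x hx'
    have h3 := (path_unique hgirth (by omega) h1 h2).2 t (by omega)
    simp only [hQ, if_pos le_rfl] at h3
    have e1 : P u t = u := (hPspec u hu).1.2.1
    have e2 : P u' t = u' := (hPspec u' hu').1.2.1
    rw [e1, e2] at h3
    exact h3
  -- finset counting
  set SF := (Set.toFinite (sphere G c t)).toFinset with hSF
  set NF : V → Finset V := fun u => (Set.toFinite (N u)).toFinset with hNF
  have hmemS : ∀ u, u ∈ SF ↔ u ∈ sphere G c t := by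
    intro u
    rw [hSF]
    exact Set.Finite.mem_toFinset _
  have hdisjF : ∀ u ∈ SF, ∀ u' ∈ SF, u ≠ u' → Disjoint (NF u) (NF u') := by
    intro u hu u' hu' hne
    simp only [hNF, Set.Finite.disjoint_toFinset]
    exact hNdisj u ((hmemS u).mp hu) u' ((hmemS u').mp hu') hne
  have hsubF : SF.biUnion NF ⊆ (Set.toFinite (sphere G c (t+1))).toFinset := by
    intro x hx
    simp only [Finset.mem_biUnion] at hx
    obtain ⟨u, huS, hxN⟩ := hx
    simp only [hNF, Set.Finite.mem_toFinset] at hxN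
    simp only [Set.Finite.mem_toFinset]
    exact hNsub u ((hmemS u).mp huS) hxN
  calc (r - 1) * (sphere G c t).ncard = ∑ _u ∈ SF, (r-1) := by
        rw [Finset.sum_const, smul_eq_mul, Set.ncard_eq_toFinset_card _ (Set.toFinite _)]
        ring
    _ ≤ ∑ u ∈ SF, (NF u).card := by
        apply Finset.sum_le_sum
        intro u hu
        rw [hNF]
        rw [← Set.ncard_eq_toFinset_card _ (Set.toFinite _)]
        exact hNcard u ((hmemS u).mp hu)
    _ = (SF.biUnion NF).card := (Finset.card_biUnion hdisjF).symm
    _ ≤ (sphere G c (t+1)).ncard := by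
        rw [Set.ncard_eq_toFinset_card _ (Set.toFinite _)]
        exact Finset.card_le_card hsubF

lemma sphere_ncard_ge {g r : ℕ} (hgirth : ∀ c : MixedCycle G, g ≤ c.len)
    (hreg : ∀ v, Nat.card {u | G.Edge v u} = r) (c : V) :
    ∀ t, 1 ≤ t → 2 * t < g → r * (r-1)^(t-1) ≤ (sphere G c t).ncard := by
  intro t
  induction t with
  | zero => intro h; omega
  | succ n ih =>
    intro _ h2
    rcases Nat.eq_zero_or_pos n with rfl | hn
    · have : (sphere G c 1).ncard = r := by
        rw [sphere_one, ← Nat.card_coe_set_eq]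
        exact hreg c
      simpa [this]
    · have step := sphere_succ_ncard hgirth hreg c n hn (by omega)
      have ihn := ih hn (by omega)
      obtain ⟨m, rfl⟩ : ∃ m, n = m + 1 := ⟨n - 1, by omega⟩
      calc r * (r-1)^(m + 1 + 1 - 1) = (r-1) * (r * (r-1)^(m+1-1)) := by
            simp only [Nat.add_sub_cancel, pow_succ]
            ring
        _ ≤ (r-1) * (sphere G c (m+1)).ncard := Nat.mul_le_mul_left _ ihn
        _ ≤ _ := step

lemma ball_ncard_ge {g r : ℕ} (hgirth : ∀ c : MixedCycle G, g ≤ c.len)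
    (hreg : ∀ v, Nat.card {u | G.Edge v u} = r) (c : V) (d : ℕ) (hd : 2 * d + 1 ≤ g) :
    mooreBound' r d ≤ (ball G c d).ncard := by
  classical
  set F : ℕ → Finset V := fun t => (Set.toFinite (sphere G c t)).toFinset with hF
  have hdisj : ∀ s ∈ Finset.range (d+1), ∀ t ∈ Finset.range (d+1), s ≠ t → Disjoint (F s) (F t) := by
    intro s hs t htt hne
    simp only [hF, Set.Finite.disjoint_toFinset]
    rw [Set.disjoint_left]
    intro y hys hyt
    simp only [Finset.mem_range] at hs htt
    obtain ⟨p, hp⟩ := hys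
    obtain ⟨q, hq⟩ := hyt
    exact hne (path_unique hgirth (by omega) hp hq).1
  have hsub : (Finset.range (d+1)).biUnion F ⊆ (Set.toFinite (ball G c d)).toFinset := by
    intro y hy
    simp only [Finset.mem_biUnion] at hy
    obtain ⟨t, htmem, hyt⟩ := hy
    simp only [Finset.mem_range] at htmem
    simp only [hF, Set.Finite.mem_toFinset] at hyt
    simp only [Set.Finite.mem_toFinset]
    exact ⟨t, by omega, hyt⟩
  have hcard : ∑ t ∈ Finset.range (d+1), (F t).card ≤ (ball G c d).ncard := by
    rw [← Finset.card_biUnion hdisj, Set.ncard_eq_toFinset_card _ (Set.toFinite _)]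
    exact Finset.card_le_card hsub
  have hterm : ∀ t ∈ Finset.range (d+1), (if t = 0 then 1 else r * (r-1)^(t-1)) ≤ (F t).card := by
    intro t htmem
    simp only [Finset.mem_range] at htmem
    rcases Nat.eq_zero_or_pos t with rfl | htpos
    · simp only [if_pos rfl, hF]
      rw [← Set.ncard_eq_toFinset_card _ (Set.toFinite _), sphere_zero]
      simp
    · rw [if_neg (by omega), hF, ← Set.ncard_eq_toFinset_card _ (Set.toFinite _)]
      exact sphere_ncard_ge hgirth hreg c t htpos (by omega)
  have hsum : ∑ t ∈ Finset.range (d+1), (if t = 0 then 1 else r * (r-1)^(t-1)) = mooreBound' r d := by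
    rw [Finset.sum_range_succ']
    have hstep : ∀ x : ℕ, (if x + 1 = 0 then 1 else r * (r-1)^(x+1-1)) = r * (r-1)^x := by
      intro x
      rw [if_neg (Nat.succ_ne_zero x), Nat.add_sub_cancel]
    simp only [hstep, eq_self_iff_true, if_true]
    rw [mooreBound', Finset.mul_sum]
    omega
  calc mooreBound' r d = ∑ t ∈ Finset.range (d+1), (if t = 0 then 1 else r * (r-1)^(t-1)) := hsum.symm
    _ ≤ ∑ t ∈ Finset.range (d+1), (F t).card := Finset.sum_le_sum hterm
    _ ≤ (ball G c d).ncard := hcard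


lemma exists_periodic (f : V → V) (x0 : V) :
    ∃ x m, 0 < m ∧ f^[m] x = x ∧ ∀ a b, a < m → b < m → f^[a] x = f^[b] x → a = b := by
  classical
  obtain ⟨a', b', hne, heq'⟩ := Finite.exists_ne_map_eq_of_infinite (fun n : ℕ => f^[n] x0)
  obtain ⟨a, b, hab, heq⟩ : ∃ a b, a < b ∧ f^[a] x0 = f^[b] x0 := by
    rcases Nat.lt_or_ge a' b' with h | h
    · exact ⟨a', b', h, heq'⟩
    · exact ⟨b', a', by omega, heq'.symm⟩
  have hper0 : f^[b - a] (f^[a] x0) = f^[a] x0 := by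
    rw [← Function.iterate_add_apply]
    have h2 : b - a + a = b := by omega
    rw [h2, ← heq]
  set x := f^[a] x0 with hx
  have hper : f^[b - a] x = x := hper0
  have hexm : ∃ m, 0 < m ∧ f^[m] x = x := ⟨b - a, by omega, hper⟩
  obtain ⟨hm_pos, hm_per⟩ := Nat.find_spec hexm
  set m := Nat.find hexm with hmdef
  refine ⟨x, m, hm_pos, hm_per, ?_⟩
  have key : ∀ a' b', a' < b' → b' < m → f^[a'] x ≠ f^[b'] x := by
    intro a' b' hab' hb' heq'
    have h1 : f^[m - b' + a'] x = x := by
      rw [Function.iterate_add_apply, heq', ← Function.iterate_add_apply]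
      have h2 : m - b' + b' = m := by omega
      rw [h2, hm_per]
    exact Nat.find_min hexm (m := m - b' + a') (by omega) ⟨by omega, h1⟩
  intro a' b' ha' hb' heq'
  rcases Nat.lt_trichotomy a' b' with h | h | h
  · exact absurd heq' (key a' b' h hb')
  · exact h
  · exact absurd heq'.symm (key b' a' h ha')

lemma orbit_long {g : ℕ} (hgirth : ∀ c : MixedCycle G, g ≤ c.len) (f : V → V)
    (harcf : ∀ v, G.Arc v (f v)) (x : V) (m : ℕ) (hm : 0 < m) (hper : f^[m] x = x)
    (hinj : ∀ a b, a < m → b < m → f^[a] x = f^[b] x → a = b) : g ≤ m := by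
  obtain ⟨c, hc⟩ := seq_cycle (G := G) m hm (fun k => f^[k] x) (fun _ => true)
    (by simpa using hper)
    (by
      intro k _ _
      show G.Arc (f^[k] x) (f^[k+1] x)
      rw [Function.iterate_succ_apply']
      exact harcf _)
    (fun k _ h => by simp at h)
    (by
      intro k l hk hl _ _ heq
      exact hinj k l hk hl heq)
    (fun k l _ _ h => by simp at h)
  rw [← hc]
  exact hgirth c

lemma balls_disjoint {g : ℕ} (hgirth : ∀ c : MixedCycle G, g ≤ c.len)
    (f : V → V) (harcf : ∀ v, G.Arc v (f v)) (x : V) (m : ℕ)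
    (hgm : g ≤ m)
    (hinj : ∀ a b, a < m → b < m → f^[a] x = f^[b] x → a = b)
    (i j : ℕ) (hij : i < j) (hjg : j < g) :
    Disjoint (ball G (f^[i] x) (min i (g-1-i))) (ball G (f^[j] x) (min j (g-1-j))) := by
  rw [Set.disjoint_left]
  intro y hyi hyj
  obtain ⟨ti, hti, pi, hpi⟩ := hyi
  obtain ⟨tj, htj, pj, hpj⟩ := hyj
  have hti' : ti ≤ i := le_trans hti (Nat.min_le_left _ _)
  have htj' : tj ≤ g - 1 - j := le_trans htj (Nat.min_le_right _ _)
  have hw : IsWalk G (f^[j] x) (f^[i] x) (tj + ti) _ := (hpj.1).concat (hpi.1.rev)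
  obtain ⟨l, pp, hl, hppp⟩ := exists_path_of_walk (G := G) (tj + ti) _ hw
  obtain ⟨⟨hpp0, hppl, hppe⟩, hppinj⟩ := hppp
  set A := j - i with hA
  set L := A + l with hL
  set w : ℕ → V := fun k => if k < A then f^[i+k] x else pp (k - A) with hw2
  have hwsucc : ∀ k, k < A → w (k+1) = f^[i+k+1] x := by
    intro k hk
    rcases Nat.lt_or_ge (k+1) A with h | h
    · simp only [hw2, if_pos h]
      congr 1
    · have hkA : k + 1 = A := by omega
      simp only [hw2, if_neg (by omega : ¬ (k + 1 < A))]
      have e1 : k + 1 - A = 0 := by omega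
      rw [e1, hpp0]
      congr 1
      omega
  obtain ⟨cy, hcy⟩ := seq_cycle (G := G) L (by omega)
    w (fun k => decide (k < A))
    (by
      show w L = w 0
      simp only [hw2, if_neg (by omega : ¬ (L < A)), if_pos (by omega : 0 < A)]
      have e1 : L - A = l := by omega
      rw [e1, hppl]
      congr 1)
    (by
      intro k hk hbk
      have hkA : k < A := of_decide_eq_true hbk
      show G.Arc (w k) (w (k+1))
      rw [hwsucc k hkA]
      simp only [hw2, if_pos hkA]
      have e1 : i + k + 1 = (i + k) + 1 := by omega
      rw [e1, Function.iterate_succ_apply']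
      exact harcf _)
    (by
      intro k hk hbk
      have hkA : ¬ (k < A) := of_decide_eq_false hbk
      show G.Edge (w k) (w (k+1))
      simp only [hw2, if_neg hkA, if_neg (by omega : ¬ (k + 1 < A))]
      have e1 : k + 1 - A = (k - A) + 1 := by omega
      rw [e1]
      exact hppe (k - A) (by omega))
    (by
      intro k l' hk hl' hbk hbl' heq
      have hkA : k < A := of_decide_eq_true hbk
      have hlA : l' < A := of_decide_eq_true hbl'
      simp only [hw2, if_pos hkA, if_pos hlA] at heq
      have := hinj (i+k) (i+l') (by omega) (by omega) heq
      omega)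
    (by
      intro k l' hk hl' hbk hbl' hor
      have hkA : ¬ (k < A) := of_decide_eq_false hbk
      have hlA : ¬ (l' < A) := of_decide_eq_false hbl'
      simp only [hw2, if_neg hkA, if_neg hlA, if_neg (by omega : ¬ (k + 1 < A)),
        if_neg (by omega : ¬ (l' + 1 < A))] at hor
      rcases hor with ⟨h1, _⟩ | ⟨h1, h2⟩
      · have := hppinj (k - A) (l' - A) (by omega) (by omega) h1
        omega
      · have e1 := hppinj (k - A) (l' + 1 - A) (by omega) (by omega) h1
        have e2 := hppinj (k + 1 - A) (l' - A) (by omega) (by omega) h2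
        omega)
  have := hgirth cy
  omega

end AHMaux

/-- The AHM bound: every `(r,1,g)`-graph has at least
`Σ_{i=0}^{g-1} n(r, min(i, g-1-i))` vertices. -/
theorem ahm_bound (r g : ℕ) (hr : 1 ≤ r) (hg : 5 ≤ g)
    (V : Type) [Fintype V] (G : MixedGraph V) (hG : IsMixedRZG G r 1 g) :
    ∑ i ∈ Finset.range g, mooreBound r (min i (g - 1 - i)) ≤ Nat.card V := by
  classical
  obtain ⟨hreg, hout, ⟨⟨c0, _⟩, hgirth⟩⟩ := hG
  haveI : NeZero c0.len := ⟨c0.len_pos.ne'⟩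
  set x0 := c0.vert 0 with hx0
  have hf : ∀ v, ∃ u, G.Arc v u ∧ ∀ u', G.Arc v u' → u' = u := by
    intro v
    have h1 : ({u | G.Arc v u}).ncard = 1 := by
      rw [← Nat.card_coe_set_eq]
      exact hout v
    obtain ⟨u, hu⟩ := Set.ncard_eq_one.mp h1
    refine ⟨u, ?_, ?_⟩
    · have h2 : u ∈ {u | G.Arc v u} := by rw [hu]; rfl
      exact h2
    · intro u' hu'
      have h2 : u' ∈ {u | G.Arc v u} := hu'
      rw [hu] at h2
      exact h2
  choose f hf1 _hf2 using hf
  obtain ⟨x, m, hm, hper, hoinj⟩ := AHMaux.exists_periodic f x0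
  have hgm : g ≤ m := AHMaux.orbit_long hgirth f hf1 x m hm hper hoinj
  set B : ℕ → Set V := fun i => AHMaux.ball G (f^[i] x) (min i (g-1-i)) with hB
  set FB : ℕ → Finset V := fun i => (Set.toFinite (B i)).toFinset with hFB
  have hdisj : ∀ i ∈ Finset.range g, ∀ j ∈ Finset.range g, i ≠ j → Disjoint (FB i) (FB j) := by
    intro i hi j hj hne
    simp only [Finset.mem_range] at hi hj
    simp only [hFB, Set.Finite.disjoint_toFinset, hB]
    rcases Nat.lt_or_ge i j with h | h
    · exact AHMaux.balls_disjoint hgirth f hf1 x m hgm hoinj i j h hj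
    · exact (AHMaux.balls_disjoint hgirth f hf1 x m hgm hoinj j i (by omega) hi).symm
  have h1 : ∀ i ∈ Finset.range g, mooreBound r (min i (g-1-i)) ≤ (FB i).card := by
    intro i hi
    simp only [Finset.mem_range] at hi
    rw [hFB]
    rw [← Set.ncard_eq_toFinset_card _ (Set.toFinite _)]
    have hmin1 : min i (g-1-i) ≤ i := Nat.min_le_left _ _
    have hmin2 : min i (g-1-i) ≤ g-1-i := Nat.min_le_right _ _
    exact AHMaux.ball_ncard_ge hgirth hreg (f^[i] x) _ (by omega)
  calc ∑ i ∈ Finset.range g, mooreBound r (min i (g - 1 - i))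
      ≤ ∑ i ∈ Finset.range g, (FB i).card := Finset.sum_le_sum h1
    _ = ((Finset.range g).biUnion FB).card := (Finset.card_biUnion hdisj).symm
    _ ≤ Fintype.card V := Finset.card_le_univ _
    _ = Nat.card V := (Nat.card_eq_fintype_card).symm
end

section
/- For every integer g ≥ 5, the minimum number of vertices of a (1,1,g)-graph is exactly 2g − 2; that is, there exists a (1,1,g)-graph on 2g − 2 vertices and every (1,1,g)-graph has at least 2g − 2 vertices. -/
section Aux
variable {V : Type*} {G : MixedGraph V}

lemma zmod_succ_val {n : ℕ} [NeZero n] (i : ZMod n) (h : i.val + 1 < n) :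
    (i + 1).val = i.val + 1 := by
  haveI : Fact (1 < n) := ⟨by omega⟩
  have h1 : (1 : ZMod n).val = 1 := ZMod.val_one n
  rw [ZMod.val_add_of_lt (by rw [h1]; omega), h1]

lemma zmod_succ_val_top {n : ℕ} [NeZero n] (i : ZMod n) (h : i.val + 1 = n) :
    (i + 1) = 0 := by
  have : i = ((i.val : ℕ) : ZMod n) := by
    apply ZMod.val_injective
    rw [ZMod.val_cast_of_lt (ZMod.val_lt i)]
  rw [this, ← Nat.cast_one, ← Nat.cast_add, h, ZMod.natCast_self]

lemma exists_cycle_arcs (w : ℕ → V) (L : ℕ) (hL : 0 < L)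
    (harc : ∀ k, k < L → G.Arc (w k) (w (k+1)))
    (hclose : w L = w 0)
    (hinj : ∀ k1 k2, k1 < L → k2 < L → w k1 = w k2 → k1 = k2) :
    ∃ c : MixedCycle G, c.len = L := by
  haveI : NeZero L := ⟨hL.ne'⟩
  have hvinj : ∀ i j : ZMod L, w i.val = w j.val → i = j := by
    intro i j h
    exact ZMod.val_injective L (hinj _ _ (ZMod.val_lt i) (ZMod.val_lt j) h)
  have hstep : ∀ i : ZMod L, G.Arc (w i.val) (w (i+1).val) := by
    intro i
    by_cases h : i.val + 1 < L
    · rw [zmod_succ_val i h]; exact harc _ (by omega)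
    · have h2 : i.val + 1 = L := by have := ZMod.val_lt i; omega
      have h3 := harc i.val (by omega)
      rw [h2, hclose] at h3
      rwa [zmod_succ_val_top i h2, ZMod.val_zero]
  exact ⟨⟨L, hL, fun i => w i.val, fun _ => true, fun i _ => hstep i,
    fun i h => by simp at h,
    fun i j _ _ h _ => hvinj i j h,
    fun i j h => by simp at h⟩, rfl⟩

lemma exists_cycle_arcs_edge (w : ℕ → V) (d : ℕ) (hd : 0 < d)
    (harc : ∀ k, k < d → G.Arc (w k) (w (k+1)))
    (hedge : G.Edge (w d) (w 0))
    (hinj : ∀ k1 k2, k1 ≤ d → k2 ≤ d → w k1 = w k2 → k1 = k2) :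
    ∃ c : MixedCycle G, c.len = d + 1 := by
  haveI : NeZero (d+1) := ⟨by omega⟩
  have hvinj : ∀ i j : ZMod (d+1), w i.val = w j.val → i = j := by
    intro i j h
    exact ZMod.val_injective _
      (hinj _ _ (by have := ZMod.val_lt i; omega) (by have := ZMod.val_lt j; omega) h)
  refine ⟨⟨d + 1, by omega, fun i => w i.val, fun i => i.val != d, ?_, ?_, ?_, ?_⟩, rfl⟩
  · intro i hi
    show G.Arc (w i.val) (w (i+1).val)
    simp only [bne_iff_ne, ne_eq] at hi
    have hlt : i.val + 1 < d + 1 := by have := ZMod.val_lt i; omega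
    rw [zmod_succ_val i hlt]
    exact harc _ (by omega)
  · intro i hi
    show G.Edge (w i.val) (w (i+1).val)
    simp only [bne_eq_false_iff_eq] at hi
    rw [zmod_succ_val_top i (by omega), ZMod.val_zero, hi]
    exact hedge
  · intro i j _ _ h _
    exact hvinj i j h
  · intro i j hi hj _
    simp only [bne_eq_false_iff_eq] at hi hj
    apply ZMod.val_injective
    rw [hi, hj]

end Aux

lemma lower_bound (g : ℕ) (hg : 5 ≤ g) (V : Type) [Fintype V] (G : MixedGraph V)
    (h : IsMixedRZG G 1 1 g) : 2 * g - 2 ≤ Nat.card V := by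
  classical
  obtain ⟨hedeg, hadeg, ⟨⟨c0, hc0⟩, hmin⟩⟩ := h
  haveI : Nonempty V := ⟨c0.vert 0⟩
  -- the out-neighbour function f
  have hfex : ∀ v : V, ∃ u, G.Arc v u ∧ ∀ u', G.Arc v u' → u' = u := by
    intro v
    obtain ⟨hsub, ⟨⟨u, hu⟩⟩⟩ := Nat.card_eq_one_iff_unique.mp (hadeg v)
    refine ⟨u, hu, fun u' hu' => ?_⟩
    exact congrArg Subtype.val (@Subsingleton.elim _ hsub (⟨u', hu'⟩ : {u | G.Arc v u}) ⟨u, hu⟩)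
  choose f hf hfu using hfex
  -- the matching partner function p
  have hpex : ∀ v : V, ∃ u, G.Edge v u ∧ ∀ u', G.Edge v u' → u' = u := by
    intro v
    obtain ⟨hsub, ⟨⟨u, hu⟩⟩⟩ := Nat.card_eq_one_iff_unique.mp (hedeg v)
    refine ⟨u, hu, fun u' hu' => ?_⟩
    exact congrArg Subtype.val (@Subsingleton.elim _ hsub (⟨u', hu'⟩ : {u | G.Edge v u}) ⟨u, hu⟩)
  choose p hp hpu using hpex
  have hpp : ∀ v, p (p v) = v := fun v => (hpu (p v) v (G.edge_symm (hp v))).symm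
  -- a periodic point of f
  obtain ⟨v0⟩ := ‹Nonempty V›
  obtain ⟨a, b, hab, heq⟩ := Fintype.exists_ne_map_eq_of_card_lt
    (fun i : Fin (Fintype.card V + 1) => f^[(i : ℕ)] v0) (by simp)
  have hvne : (a : ℕ) ≠ (b : ℕ) := fun h => hab (Fin.ext h)
  have hexper : ∃ k, 0 < k ∧ f^[k] (f^[min (a:ℕ) (b:ℕ)] v0) = f^[min (a:ℕ) (b:ℕ)] v0 := by
    refine ⟨max (a:ℕ) (b:ℕ) - min (a:ℕ) (b:ℕ), by omega, ?_⟩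
    rw [← Function.iterate_add_apply, Nat.sub_add_cancel (by omega)]
    rcases Nat.le_total (a:ℕ) (b:ℕ) with hle | hle
    · rw [max_eq_right hle, min_eq_left hle]; exact heq.symm
    · rw [max_eq_left hle, min_eq_right hle]; exact heq
  set x := f^[min (a:ℕ) (b:ℕ)] v0 with hxdef
  clear_value x
  clear heq hvne hab hxdef
  set L := Nat.find hexper with hLdef
  obtain ⟨hL1, hL2⟩ := Nat.find_spec hexper
  rw [← hLdef] at hL1 hL2
  have hLmin : ∀ k, 0 < k → f^[k] x = x → L ≤ k := fun k h1 h2 => hLdef ▸ Nat.find_le ⟨h1, h2⟩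
  clear_value L
  have hfix : ∀ q, f^[L * q] x = x := by
    intro q
    rw [Function.iterate_mul]
    exact Function.IsFixedPt.iterate hL2 q
  have hmodL : ∀ k, f^[k % L] x = f^[k] x := by
    intro k
    conv_rhs => rw [← Nat.div_add_mod k L]
    rw [Nat.add_comm, Function.iterate_add_apply, hfix]
  have hinj : ∀ s t, s < L → t < L → f^[s] x = f^[t] x → s = t := by
    intro s t hs ht hst
    by_contra hne
    wlog hlt : s < t generalizing s t
    · exact this t s ht hs hst.symm (Ne.symm hne) (by omega)
    have h1 : f^[L - t + s] x = f^[L] x := by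
      have h2 := congrArg (f^[L - t]) hst
      rw [← Function.iterate_add_apply, ← Function.iterate_add_apply,
        show L - t + t = L by omega] at h2
      exact h2
    rw [hL2] at h1
    have := hLmin (L - t + s) (by omega) h1
    omega
  have horb : ∀ s t, f^[s] x = f^[t] x → s % L = t % L := fun s t h =>
    hinj _ _ (Nat.mod_lt _ hL1) (Nat.mod_lt _ hL1) (by rw [hmodL, hmodL]; exact h)
  have harcstep : ∀ k, G.Arc (f^[k] x) (f^[k+1] x) := by
    intro k; rw [Function.iterate_succ_apply']; exact hf _
  obtain ⟨c1, hc1⟩ := exists_cycle_arcs (G := G) (fun k => f^[k] x) L hL1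
    (fun k _ => harcstep k) (by simpa using hL2)
    (fun k1 k2 h1 h2 h => hinj _ _ h1 h2 h)
  have hgL : g ≤ L := hc1 ▸ hmin c1
  by_cases hbig : 2 * g - 2 ≤ L
  · have hcard : L ≤ Fintype.card V := by
      have := Fintype.card_le_of_injective (fun i : Fin L => f^[(i : ℕ)] x)
        (fun i j h => Fin.ext (hinj _ _ i.isLt j.isLt h))
      simpa using this
    rw [Nat.card_eq_fintype_card]; omega
  · push_neg at hbig
    have hkey : ∀ i j, i < j → j < L → ¬ G.Edge (f^[j] x) (f^[i] x) := by
      intro i j hij hjL hE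
      obtain ⟨cA, hcA⟩ := exists_cycle_arcs_edge (G := G) (fun k => f^[i+k] x) (j - i) (by omega)
        (fun k hk => by
          show G.Arc (f^[i+k] x) (f^[i+(k+1)] x)
          rw [show i + (k+1) = (i+k) + 1 by ring]
          exact harcstep _)
        (by
          show G.Edge (f^[i + (j-i)] x) (f^[i+0] x)
          rw [show i + (j - i) = j by omega, show i + 0 = i by ring]
          exact hE)
        (fun k1 k2 h1 h2 h => by
          have hm := horb _ _ h
          have : k1 % L = k2 % L := Nat.ModEq.add_left_cancel' i hm
          rwa [Nat.mod_eq_of_lt (by omega), Nat.mod_eq_of_lt (by omega)] at this)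
      have hA : g ≤ j - i + 1 := hcA ▸ hmin cA
      obtain ⟨cB, hcB⟩ := exists_cycle_arcs_edge (G := G) (fun k => f^[j+k] x) (L - j + i)
        (by omega)
        (fun k hk => by
          show G.Arc (f^[j+k] x) (f^[j+(k+1)] x)
          rw [show j + (k+1) = (j+k) + 1 by ring]
          exact harcstep _)
        (by
          show G.Edge (f^[j + (L - j + i)] x) (f^[j+0] x)
          rw [show j + (L - j + i) = i + L by omega, Function.iterate_add_apply, hL2,
            show j + 0 = j by ring]
          exact G.edge_symm hE)
        (fun k1 k2 h1 h2 h => by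
          have hm := horb _ _ h
          have : k1 % L = k2 % L := Nat.ModEq.add_left_cancel' j hm
          rwa [Nat.mod_eq_of_lt (by omega), Nat.mod_eq_of_lt (by omega)] at this)
      have hB : g ≤ L - j + i + 1 := hcB ▸ hmin cB
      omega
    have hout : ∀ i j, i < L → j < L → p (f^[j] x) ≠ f^[i] x := by
      intro i j hi hj hpe
      have hE : G.Edge (f^[j] x) (f^[i] x) := hpe ▸ hp _
      have hne : i ≠ j := by
        intro h; subst h
        exact G.edge_irrefl _ hE
      rcases Nat.lt_or_ge i j with hlt | hge
      · exact hkey i j hlt hj hE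
      · exact hkey j i (by omega) hi (G.edge_symm hE)
    have hpinj : Function.Injective p := fun u v h => by rw [← hpp u, h, hpp]
    have hinj2 : Function.Injective
        (Sum.elim (fun i : Fin L => f^[(i:ℕ)] x) (fun i : Fin L => p (f^[(i:ℕ)] x))) := by
      rintro (i | i) (j | j) h <;> simp only [Sum.elim_inl, Sum.elim_inr] at h
      · exact congrArg Sum.inl (Fin.ext (hinj _ _ i.isLt j.isLt h))
      · exact absurd h.symm (hout i j i.isLt j.isLt)
      · exact absurd h (hout j i j.isLt i.isLt)
      · exact congrArg Sum.inr (Fin.ext (hinj _ _ i.isLt j.isLt (hpinj h)))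
    have hcard2 : L + L ≤ Fintype.card V := by
      have := Fintype.card_le_of_injective _ hinj2
      simpa using this
    rw [Nat.card_eq_fintype_card]; omega

section Construction
variable (g : ℕ)

lemma construction_min (hg : 5 ≤ g) {G : MixedGraph (ZMod (2*g-2))}
    (hA : ∀ u v, G.Arc u v ↔ v = u + 1)
    (hE : ∀ u v, G.Edge u v ↔ v = u + ((g-1 : ℕ) : ZMod (2*g-2)))
    (c : MixedCycle G) : g ≤ c.len := by
  classical
  set n := 2*g-2 with hn
  haveI : NeZero n := ⟨by omega⟩
  set m : ZMod n := ((g-1 : ℕ) : ZMod n) with hmdef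
  have hmm : m + m = 0 := by
    rw [hmdef, ← Nat.cast_add, show (g-1) + (g-1) = n by omega, ZMod.natCast_self]
  by_contra hlt
  push_neg at hlt
  have hL1 : 0 < c.len := c.len_pos
  set L := c.len with hLdef
  haveI : NeZero L := ⟨by omega⟩
  -- step differences
  have hstep : ∀ i : ZMod L, c.vert (i+1) - c.vert i = if c.useArc i = true then (1:ZMod n) else m := by
    intro i
    by_cases h : c.useArc i = true
    · rw [if_pos h, (hA _ _).mp (c.step_arc i h)]; ring
    · rw [if_neg h, (hE _ _).mp (c.step_edge i (by simpa using h))]; ring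
  have hsum : ∑ i : ZMod L, (c.vert (i+1) - c.vert i) = 0 := by
    rw [Finset.sum_sub_distrib, sub_eq_zero]
    exact Fintype.sum_equiv (Equiv.addRight (1 : ZMod L)) _ _ (fun i => rfl)
  rw [Finset.sum_congr rfl (fun i _ => hstep i)] at hsum
  rw [Finset.sum_ite, Finset.sum_const, Finset.sum_const, nsmul_eq_mul, nsmul_eq_mul, mul_one] at hsum
  set A := (Finset.univ.filter (fun i : ZMod L => c.useArc i = true)).card with hAdef
  set E := (Finset.univ.filter (fun i : ZMod L => ¬ c.useArc i = true)).card with hEdef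
  have hAE : A + E = L := by
    rw [hAdef, hEdef, Finset.card_filter_add_card_filter_not, Finset.card_univ, ZMod.card]
  have hdvd : n ∣ A + E * (g-1) := by
    rw [← ZMod.natCast_eq_zero_iff]
    push_cast [← hmdef]
    rw [hsum]
  rcases Nat.even_or_odd E with ⟨q, hq⟩ | ⟨q, hq⟩
  · -- E even : A ≡ 0 mod n, so A = 0, all steps are edges
    have hEq : E * (g-1) = q * n := by
      rw [hq, hn]
      have h2 : 2 * (g-1) = 2*g-2 := by omega
      calc (q + q) * (g-1) = q * (2 * (g-1)) := by ring
        _ = q * (2*g-2) := by rw [h2]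
    have hdvdA : n ∣ A := by
      have h3 : n ∣ A + q * n := by rwa [hEq] at hdvd
      have h4 := Nat.dvd_sub h3 (dvd_mul_left n q)
      simpa using h4
    have hA0 : A = 0 := by
      rcases Nat.eq_zero_or_pos A with h | h
      · exact h
      · have := Nat.le_of_dvd h hdvdA; omega
    have hallE : ∀ i : ZMod L, c.useArc i = false := by
      intro i
      by_contra hi
      have hi' : c.useArc i = true := by
        cases hb : c.useArc i
        · exact absurd hb hi
        · rfl
      have hmem : i ∈ Finset.univ.filter (fun i : ZMod L => c.useArc i = true) :=
        Finset.mem_filter.mpr ⟨Finset.mem_univ i, hi'⟩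
      have hpos : 0 < A := by rw [hAdef]; exact Finset.card_pos.mpr ⟨i, hmem⟩
      omega
    -- every step is an edge
    have vstep : ∀ i : ZMod L, c.vert (i+1) = c.vert i + m := fun i =>
      (hE _ _).mp (c.step_edge i (hallE i))
    have hLE : L = E := by omega
    -- L is even, ≥ 2
    rcases Nat.lt_or_ge L 3 with h3 | h3
    · -- L = 2
      have hL2 : L = 2 := by omega
      have h11 : ((1:ZMod L) + 1) = 0 := by
        rw [← Nat.cast_one, ← Nat.cast_add, ZMod.natCast_eq_zero_iff, hL2]
      have := c.edge_once 0 1 (hallE 0) (hallE 1)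
        (Or.inr ⟨by rw [h11], by rw [zero_add]⟩)
      have h01 := congrArg ZMod.val this
      haveI : Fact (1 < L) := ⟨by omega⟩
      rw [ZMod.val_zero, ZMod.val_one] at h01
      omega
    · -- L ≥ 3 : steps 0 and 2 use the same edge
      have hv2 : c.vert (0+1+1) = c.vert 0 := by
        rw [vstep, vstep, add_assoc, hmm, add_zero]
      have hv3 : c.vert (0+1+1+1) = c.vert (0+1) := by
        rw [vstep, hv2, vstep]
      have := c.edge_once 0 (0+1+1) (hallE 0) (hallE _) (Or.inl ⟨hv2.symm, hv3.symm⟩)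
      have h02 := congrArg ZMod.val this.symm
      rw [show ((0:ZMod L)+1+1) = ((2:ℕ) : ZMod L) by push_cast; ring,
        ZMod.val_cast_of_lt (by omega), ZMod.val_zero] at h02
      omega
  · -- E odd : A + (g-1) ≡ 0 mod n, impossible
    have hEq : E * (g-1) = (g-1) + q * n := by
      rw [hq, hn]
      have h2 : 2 * (g-1) = 2*g-2 := by omega
      calc (2*q + 1) * (g-1) = (g-1) + q * (2 * (g-1)) := by ring
        _ = (g-1) + q * (2*g-2) := by rw [h2]
    have hdvdA : n ∣ A + (g-1) := by
      have h3 : n ∣ (A + (g-1)) + q * n := by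
        rwa [hEq, ← Nat.add_assoc] at hdvd
      have h4 := Nat.dvd_sub h3 (dvd_mul_left n q)
      simpa using h4
    have hEpos : 1 ≤ E := by omega
    have := Nat.le_of_dvd (by omega) hdvdA
    omega

end Construction

/-- `f(1,1,g) = 2g - 2` for every `g ≥ 5`. -/
theorem f_1_1_g (g : ℕ) (hg : 5 ≤ g) :
    (∃ (V : Type) (_ : Fintype V) (G : MixedGraph V),
      Nat.card V = 2 * g - 2 ∧ IsMixedRZG G 1 1 g) ∧
    (∀ (V : Type) [Fintype V] (G : MixedGraph V),
      IsMixedRZG G 1 1 g → 2 * g - 2 ≤ Nat.card V) := by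
  constructor
  · -- construction
    classical
    haveI : NeZero (2*g-2) := ⟨by omega⟩
    set n := 2*g-2 with hn
    set m : ZMod n := ((g-1 : ℕ) : ZMod n) with hmdef
    have hmm : m + m = 0 := by
      rw [hmdef, ← Nat.cast_add, show (g-1) + (g-1) = n by omega, ZMod.natCast_self]
    have hm0 : m ≠ 0 := by
      rw [hmdef, Ne, ZMod.natCast_eq_zero_iff]
      intro hdvd
      have := Nat.le_of_dvd (by omega) hdvd
      omega
    have h10 : (1 : ZMod n) ≠ 0 := by
      have h : ((1:ℕ) : ZMod n) ≠ 0 := by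
        rw [Ne, ZMod.natCast_eq_zero_iff]
        intro hd
        have := Nat.le_of_dvd one_pos hd
        omega
      simpa using h
    set Gr : MixedGraph (ZMod n) :=
      { Edge := fun u v => v = u + m
        Arc := fun u v => v = u + 1
        edge_symm := fun {u v} h => by
          show u = v + m
          rw [(h : v = u + m), add_assoc, hmm, add_zero]
        edge_irrefl := fun v h => hm0 (left_eq_add.mp (h : v = v + m))
        arc_irrefl := fun v h => h10 (left_eq_add.mp (h : v = v + 1)) } with hGr
    refine ⟨ZMod n, inferInstance, Gr, ?_, ?_, ?_, ?_, ?_⟩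
    · -- card
      rw [Nat.card_eq_fintype_card, ZMod.card]
    · -- edge degree
      intro v
      show Nat.card {u : ZMod n | u = v + m} = 1
      rw [Set.setOf_eq_eq_singleton]
      simp
    · -- arc degree
      intro v
      show Nat.card {u : ZMod n | u = v + 1} = 1
      rw [Set.setOf_eq_eq_singleton]
      simp
    · -- girth : existence of a g-cycle
      obtain ⟨c, hc⟩ := exists_cycle_arcs_edge (G := Gr) (w := fun k => ((k : ℕ) : ZMod n))
        (d := g-1)
        (by omega)
        (fun k hk => by
          show (((k+1) : ℕ) : ZMod n) = ((k : ℕ) : ZMod n) + 1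
          push_cast; ring)
        (by
          show ((0:ℕ) : ZMod n) = ((g-1 : ℕ) : ZMod n) + m
          rw [hmdef, ← Nat.cast_add, show (g-1) + (g-1) = n by omega, ZMod.natCast_self,
            Nat.cast_zero])
        (fun k1 k2 h1 h2 h => by
          have := congrArg ZMod.val h
          rwa [ZMod.val_cast_of_lt (by omega), ZMod.val_cast_of_lt (by omega)] at this)
      exact ⟨c, by omega⟩
    · -- girth : minimality
      intro c
      exact construction_min g hg (G := Gr) (fun u v => Iff.rfl) (fun u v => Iff.rfl) c
  · intro V _ G h
    exact lower_bound g hg V G h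
end

section
/- For every integer g ≥ 5, the minimum number of vertices of a (2,1,g)-graph is (g² + 1)/2 if g is odd and g²/2 if g is even. -/
namespace Aux

variable {V : Type*} {G : MixedGraph V}

lemma zmod_val_succ {ℓ : ℕ} [NeZero ℓ] (k : ZMod ℓ) :
    (k + 1).val = if k.val + 1 = ℓ then 0 else k.val + 1 := by
  have hk : k.val < ℓ := ZMod.val_lt k
  rw [ZMod.val_add, ZMod.val_one_eq_one_mod]
  rcases Nat.lt_or_ge 1 ℓ with h1 | h1
  · rw [Nat.mod_eq_of_lt h1]
    rcases eq_or_ne (k.val + 1) ℓ with h | h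
    · rw [if_pos h, h, Nat.mod_self]
    · rw [if_neg h, Nat.mod_eq_of_lt (by omega)]
  · have hℓ : ℓ = 1 := by omega
    subst hℓ
    have hk0 : k = 0 := Subsingleton.elim k 0
    simp [hk0]

/-- Build a mixed cycle from `s ≥ 1` arcs followed by `ℓ - s` edges. -/
def mkCycle1 (f : ℕ → V) (s ℓ : ℕ) (hs : 1 ≤ s) (hsl : s ≤ ℓ)
    (harc : ∀ t, t < s → G.Arc (f t) (f (t+1)))
    (hedge : ∀ t, s ≤ t → t < ℓ → G.Edge (f t) (f (t+1)))
    (hclosed : f ℓ = f 0)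
    (hinj1 : ∀ t t', t < s → t' < s → f t = f t' → t = t')
    (hinj2 : ∀ t t', s ≤ t → t ≤ ℓ → s ≤ t' → t' ≤ ℓ → f t = f t' → t = t') :
    MixedCycle G := by
  have hl : 0 < ℓ := lt_of_lt_of_le hs hsl
  have : NeZero ℓ := ⟨hl.ne'⟩
  refine
    { len := ℓ, len_pos := hl,
      vert := fun k => f k.val,
      useArc := fun k => decide (k.val < s),
      step_arc := ?step_arc, step_edge := ?step_edge, arc_once := ?arc_once, edge_once := ?edge_once }
  case step_arc =>
    intro i hi
    have hnext : f ((i+1).val) = f (i.val + 1) := by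
      rw [zmod_val_succ]
      split
      · rw [← hclosed]; congr 1; omega
      · rfl
    simp only [decide_eq_true_eq] at hi
    rw [hnext]; exact harc _ hi
  case step_edge =>
    intro i hi
    simp only [decide_eq_false_iff_not, not_lt] at hi
    have hnext : f ((i+1).val) = f (i.val + 1) := by
      rw [zmod_val_succ]
      split
      · rw [← hclosed]; congr 1; omega
      · rfl
    rw [hnext]; exact hedge _ hi (ZMod.val_lt i)
  case arc_once =>
    intro i j hi hj hv _
    simp only [decide_eq_true_eq] at hi hj
    have := hinj1 _ _ hi hj hv
    exact ZMod.val_injective ℓ this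
  case edge_once =>
    intro i j hi hj hcase
    simp only [decide_eq_false_iff_not, not_lt] at hi hj
    have hni : f ((i+1).val) = f (i.val + 1) := by
      rw [zmod_val_succ]; split
      · rw [← hclosed]; congr 1; omega
      · rfl
    have hnj : f ((j+1).val) = f (j.val + 1) := by
      rw [zmod_val_succ]; split
      · rw [← hclosed]; congr 1; omega
      · rfl
    have hiv := ZMod.val_lt i
    have hjv := ZMod.val_lt j
    rcases hcase with ⟨h1, _⟩ | ⟨h1, h2⟩
    · exact ZMod.val_injective ℓ (hinj2 _ _ hi (by omega) hj (by omega) h1)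
    · rw [hnj] at h1
      rw [hni] at h2
      have e1 := hinj2 _ _ hi (by omega) (by omega) (by omega) h1
      have e2 := hinj2 _ _ (by omega) (by omega) hj (by omega) h2
      omega

lemma mkCycle1_len (f : ℕ → V) (s ℓ : ℕ) (hs : 1 ≤ s) (hsl : s ≤ ℓ)
    (harc : ∀ t, t < s → G.Arc (f t) (f (t+1)))
    (hedge : ∀ t, s ≤ t → t < ℓ → G.Edge (f t) (f (t+1)))
    (hclosed : f ℓ = f 0)
    (hinj1 : ∀ t t', t < s → t' < s → f t = f t' → t = t')
    (hinj2 : ∀ t t', s ≤ t → t ≤ ℓ → s ≤ t' → t' ≤ ℓ → f t = f t' → t = t') :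
    (mkCycle1 (G := G) f s ℓ hs hsl harc hedge hclosed hinj1 hinj2).len = ℓ := rfl

/-- Build a mixed cycle from a closed edge polygon with distinct vertices. -/
def mkCycle2 (f : ℕ → V) (ℓ : ℕ) (h3 : 3 ≤ ℓ)
    (hedge : ∀ t, t < ℓ → G.Edge (f t) (f (t+1)))
    (hclosed : f ℓ = f 0)
    (hinj : ∀ t t', t < ℓ → t' < ℓ → f t = f t' → t = t') :
    MixedCycle G := by
  have hl : 0 < ℓ := by omega
  have : NeZero ℓ := ⟨hl.ne'⟩
  refine
    { len := ℓ, len_pos := hl,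
      vert := fun k => f k.val,
      useArc := fun _ => false,
      step_arc := by simp, step_edge := ?step_edge, arc_once := by simp, edge_once := ?edge_once }
  case step_edge =>
    intro i _
    have hnext : f ((i+1).val) = f (i.val + 1) := by
      rw [zmod_val_succ]; split
      · rw [← hclosed]; congr 1; omega
      · rfl
    rw [hnext]; exact hedge _ (ZMod.val_lt i)
  case edge_once =>
    intro i j _ _ hcase
    have hiv := ZMod.val_lt i
    have hjv := ZMod.val_lt j
    have hni : f ((i+1).val) = f ((i.val + 1) % ℓ) := by
      rw [zmod_val_succ]; split
      · rename_i hq; rw [hq, Nat.mod_self]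
      · rw [Nat.mod_eq_of_lt (by omega)]
    have hnj : f ((j+1).val) = f ((j.val + 1) % ℓ) := by
      rw [zmod_val_succ]; split
      · rename_i hq; rw [hq, Nat.mod_self]
      · rw [Nat.mod_eq_of_lt (by omega)]
    rcases hcase with ⟨h1, _⟩ | ⟨h1, h2⟩
    · exact ZMod.val_injective ℓ (hinj _ _ hiv hjv h1)
    · rw [hnj] at h1
      rw [hni] at h2
      have e1 := hinj _ _ hiv (Nat.mod_lt _ hl) h1
      have e2 := hinj _ _ (Nat.mod_lt _ hl) hjv h2
      rcases eq_or_ne (j.val + 1) ℓ with hw | hw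
      · rw [hw, Nat.mod_self] at e1
        rcases eq_or_ne (i.val + 1) ℓ with hw2 | hw2
        · rw [hw2, Nat.mod_self] at e2; omega
        · rw [Nat.mod_eq_of_lt (by omega)] at e2; omega
      · rw [Nat.mod_eq_of_lt (by omega)] at e1
        rcases eq_or_ne (i.val + 1) ℓ with hw2 | hw2
        · rw [hw2, Nat.mod_self] at e2; omega
        · rw [Nat.mod_eq_of_lt (by omega)] at e2; omega

lemma mkCycle2_len (f : ℕ → V) (ℓ : ℕ) (h3 : 3 ≤ ℓ)
    (hedge : ∀ t, t < ℓ → G.Edge (f t) (f (t+1)))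
    (hclosed : f ℓ = f 0)
    (hinj : ∀ t t', t < ℓ → t' < ℓ → f t = f t' → t = t') :
    (mkCycle2 (G := G) f ℓ h3 hedge hclosed hinj).len = ℓ := rfl

end Aux

namespace Aux

section Walks

variable {V : Type*} {G : MixedGraph V}
variable (nb1 nb2 : V → V)

open Classical in
/-- the neighbour of `x` other than `y` (w.r.t. chosen neighbour functions) -/
noncomputable def other (x y : V) : V := if y = nb1 x then nb2 x else nb1 x

noncomputable def stepE : V × V → V × V := fun p => (p.2, other nb1 nb2 p.2 p.1)

noncomputable def pos (n : ℕ) (st : V × V) : V := ((stepE nb1 nb2)^[n] st).1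

lemma other_edge (h1 : ∀ v, G.Edge v (nb1 v)) (h2 : ∀ v, G.Edge v (nb2 v))
    (x y : V) : G.Edge x (other nb1 nb2 x y) := by
  unfold other; split
  · exact h2 x
  · exact h1 x

lemma other_ne (h12 : ∀ v, nb1 v ≠ nb2 v) (x y : V) : other nb1 nb2 x y ≠ y := by
  unfold other; split
  · rename_i h; rw [h]; exact (h12 x).symm
  · rename_i h; exact fun hc => h hc.symm

lemma pos_zero (st : V × V) : pos nb1 nb2 0 st = st.1 := rfl

lemma pos_one (st : V × V) : pos nb1 nb2 1 st = st.2 := rfl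

lemma pos_succ_succ (n : ℕ) (st : V × V) :
    pos nb1 nb2 (n+2) st = other nb1 nb2 (pos nb1 nb2 (n+1) st) (pos nb1 nb2 n st) := by
  have e1 : ∀ m, pos nb1 nb2 (m+1) st = ((stepE nb1 nb2)^[m] st).2 := by
    intro m
    rw [pos, Function.iterate_succ_apply', stepE]
  rw [e1, Function.iterate_succ_apply', pos, Function.iterate_succ_apply']
  rfl

lemma pos_edge (h1 : ∀ v, G.Edge v (nb1 v)) (h2 : ∀ v, G.Edge v (nb2 v))
    (st : V × V) (hst : G.Edge st.1 st.2) (n : ℕ) :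
    G.Edge (pos nb1 nb2 n st) (pos nb1 nb2 (n+1) st) := by
  induction n with
  | zero => exact hst
  | succ m ih =>
    rw [pos_succ_succ]
    exact other_edge nb1 nb2 h1 h2 _ _


lemma pos_nb (h12 : ∀ v, nb1 v ≠ nb2 v) (st : V × V) (n : ℕ) :
    pos nb1 nb2 (n+2) st ≠ pos nb1 nb2 n st := by
  rw [pos_succ_succ]
  exact other_ne nb1 nb2 h12 _ _


end Walks

section Girth

variable {V : Type*} {G : MixedGraph V} {g : ℕ}

/-- any short non-backtracking edge walk has distinct vertices -/
lemma lemW (hg : 5 ≤ g) (hgirth : ∀ c : MixedCycle G, g ≤ c.len)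
    (q : ℕ → V) (N : ℕ) (hN : N ≤ g - 1)
    (hedge : ∀ t, t < N → G.Edge (q t) (q (t+1)))
    (hnb : ∀ t, t + 2 ≤ N → q (t+2) ≠ q t) :
    ∀ i j, i ≤ N → j ≤ N → q i = q j → i = j := by
  suffices H : ∀ k i j, j - i = k → i < j → j ≤ N → q i = q j → False by
    intro i j hi hj hq
    rcases Nat.lt_trichotomy i j with h | h | h
    · exact absurd hq (fun hc => H (j-i) i j rfl h hj hc)
    · exact h
    · exact absurd hq.symm (fun hc => H (i-j) j i rfl h hi hc)
  intro k
  induction k using Nat.strong_induction_on with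
  | _ k ih =>
    intro i j hk hij hjN hq
    by_cases hI : ∃ t t', i ≤ t ∧ t < t' ∧ t' < j ∧ q t = q t'
    · obtain ⟨t, t', ht, htt, ht', hqt⟩ := hI
      exact ih (t' - t) (by omega) t t' rfl htt (by omega) hqt
    · push_neg at hI
      -- all vertices in [i, j) distinct; build a pure edge cycle
      have hinj : ∀ t t', t < j - i → t' < j - i → q (i + t) = q (i + t') → t = t' := by
        intro t t' ht ht' hqq
        by_contra hne
        rcases Nat.lt_or_ge t t' with h | h
        · exact hI (i+t) (i+t') (by omega) (by omega) (by omega) hqq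
        · exact hI (i+t') (i+t) (by omega) (by omega) (by omega) hqq.symm
      have h3 : 3 ≤ j - i := by
        rcases (by omega : j - i = 1 ∨ j - i = 2 ∨ 3 ≤ j - i) with h | h | h
        · exfalso
          have := hedge i (by omega)
          rw [(by omega : i + 1 = j), ← hq] at this
          exact G.edge_irrefl _ this
        · exfalso
          exact hnb i (by omega) (by rw [(by omega : i + 2 = j)]; exact hq.symm ▸ hq)
        · exact h
      have hlen := hgirth (mkCycle2 (fun t => q (i + t)) (j - i) h3
        (fun t ht => by
          have : i + t < N := by omega
          have := hedge (i+t) this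
          simpa [Nat.add_assoc] using this)
        (by rw [(by omega : i + (j - i) = j), Nat.add_zero, hq])
        hinj)
      rw [mkCycle2_len] at hlen
      omega

end Girth

end Aux

namespace Aux

section ArcLemmas

variable {V : Type*} {G : MixedGraph V} {g : ℕ}

/-- no short arc-only closed walks -/
lemma lemA (hg : 5 ≤ g) (hgirth : ∀ c : MixedCycle G, g ≤ c.len)
    (σ : V → V) (hσ : ∀ v, G.Arc v (σ v)) :
    ∀ p, 1 ≤ p → p ≤ g - 1 → ∀ y, σ^[p] y ≠ y := by
  intro p
  induction p using Nat.strong_induction_on with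
  | _ p ih =>
    intro hp1 hpg y hEq
    by_cases hI : ∃ t t', t < t' ∧ t' < p ∧ σ^[t] y = σ^[t'] y
    · obtain ⟨t, t', htt, ht', hq⟩ := hI
      have : σ^[t'-t] (σ^[t] y) = σ^[t] y := by
        rw [← Function.iterate_add_apply, (by omega : t' - t + t = t'), hq]
      exact ih (t'-t) (by omega) (by omega) (by omega) _ this
    · push_neg at hI
      have hinj1 : ∀ t t', t < p → t' < p → σ^[t] y = σ^[t'] y → t = t' := by
        intro t t' ht ht' hq
        by_contra hne
        rcases Nat.lt_or_ge t t' with h | h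
        · exact hI t t' h ht' hq
        · exact hI t' t (by omega) ht hq.symm
      have hlen := hgirth (mkCycle1 (fun t => σ^[t] y) p p hp1 le_rfl
        (fun t ht => by
          show G.Arc (σ^[t] y) (σ^[t+1] y)
          rw [Function.iterate_succ_apply']
          exact hσ _)
        (fun t ht1 ht2 => by omega)
        (by simp [hEq])
        hinj1
        (fun t t' h1 h2 h3 h4 _ => by omega))
      change g ≤ p at hlen
      omega

lemma lemA' (hg : 5 ≤ g) (hgirth : ∀ c : MixedCycle G, g ≤ c.len)
    (σ : V → V) (hσ : ∀ v, G.Arc v (σ v)) (y : V) :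
    ∀ i j, i ≤ g - 1 → j ≤ g - 1 → σ^[i] y = σ^[j] y → i = j := by
  intro i j hi hj hq
  rcases Nat.lt_trichotomy i j with h | h | h
  · exfalso
    refine lemA hg hgirth σ hσ (j - i) (by omega) (by omega) (σ^[i] y) ?_
    rw [← Function.iterate_add_apply, (by omega : j - i + i = j), hq]
  · exact h
  · exfalso
    refine lemA hg hgirth σ hσ (i - j) (by omega) (by omega) (σ^[j] y) ?_
    rw [← Function.iterate_add_apply, (by omega : i - j + j = i), hq.symm]

end ArcLemmas

end Aux

namespace Aux

section KeyLemmas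

variable {V : Type*} {G : MixedGraph V} {g : ℕ} (nb1 nb2 : V → V)

lemma lemKEY (hg : 5 ≤ g) (hgirth : ∀ c : MixedCycle G, g ≤ c.len)
    (σ : V → V) (hσ : ∀ v, G.Arc v (σ v))
    (h1 : ∀ v, G.Edge v (nb1 v)) (h2 : ∀ v, G.Edge v (nb2 v)) (h12 : ∀ v, nb1 v ≠ nb2 v) :
    ∀ k (u : V) (s : ℕ) (st st' : V × V), 1 ≤ s →
      st.1 = u → st'.1 = σ^[s] u → G.Edge st.1 st.2 → G.Edge st'.1 st'.2 →
      ∀ β β', β + β' = k → s + β + β' ≤ g - 1 →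
      pos nb1 nb2 β' st' = pos nb1 nb2 β st → False := by
  intro k
  induction k using Nat.strong_induction_on with
  | _ k ih =>
  intro u s st st' hs hst1 hst'1 hstE hst'E β β' hk hbound hcol
  by_cases hrec : 1 ≤ β ∧ 1 ≤ β' ∧ pos nb1 nb2 (β'-1) st' = pos nb1 nb2 (β-1) st
  · obtain ⟨hb, hb', hcol'⟩ := hrec
    exact ih ((β-1)+(β'-1)) (by omega) u s st st' hs hst1 hst'1 hstE hst'E
      (β-1) (β'-1) rfl (by omega) hcol'
  · set q : ℕ → V := fun t => if t ≤ β' then pos nb1 nb2 t st' else pos nb1 nb2 (β + β' - t) st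
      with hqdef
    have hqle : ∀ t, t ≤ β' → q t = pos nb1 nb2 t st' := by
      intro t ht; simp only [hqdef]; rw [if_pos ht]
    have hqgt : ∀ t, β' < t → q t = pos nb1 nb2 (β + β' - t) st := by
      intro t ht; simp only [hqdef]; rw [if_neg (by omega)]
    have hqst : ∀ t, β' ≤ t → q t = pos nb1 nb2 (β + β' - t) st := by
      intro t ht
      rcases eq_or_lt_of_le ht with h | h
      · rw [← h, hqle _ le_rfl, hcol]
        congr 1; omega
      · exact hqgt _ h
    have hq_edge : ∀ r, r < β + β' → G.Edge (q r) (q (r+1)) := by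
      intro r hr
      by_cases hr1 : r + 1 ≤ β'
      · rw [hqle _ (by omega), hqle _ hr1]
        exact pos_edge nb1 nb2 h1 h2 st' hst'E r
      · rw [hqst _ (by omega), hqgt _ (by omega)]
        have hE := pos_edge nb1 nb2 h1 h2 st hstE (β + β' - (r+1))
        rw [(by omega : β + β' - (r+1) + 1 = β + β' - r)] at hE
        exact G.edge_symm hE
    have hq_nb : ∀ t, t + 2 ≤ β + β' → q (t+2) ≠ q t := by
      intro t ht
      by_cases hc1 : t + 2 ≤ β'
      · rw [hqle _ hc1, hqle _ (by omega)]
        exact pos_nb nb1 nb2 h12 st' t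
      · by_cases hc2 : t + 1 = β'
        · rw [hqgt (t+2) (by omega), hqle t (by omega)]
          rw [(by omega : β + β' - (t + 2) = β - 1)]
          intro hEq
          exact hrec ⟨by omega, by omega, by rw [(by omega : β' - 1 = t)]; exact hEq.symm⟩
        · -- t ≥ β'
          rw [hqst _ (by omega), hqst _ (by omega)]
          have := pos_nb nb1 nb2 h12 st (β + β' - (t+2))
          rw [(by omega : β + β' - (t+2) + 2 = β + β' - t)] at this
          exact this.symm
    have hq_inj := lemW hg hgirth q (β+β') (by omega) hq_edge hq_nb
    set f : ℕ → V := fun t => if t < s then σ^[t] u else q (t - s) with hfdef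
    have hflt : ∀ t, t < s → f t = σ^[t] u := by
      intro t ht; simp only [hfdef]; rw [if_pos ht]
    have hfge : ∀ t, s ≤ t → f t = q (t - s) := by
      intro t ht; simp only [hfdef]; rw [if_neg (by omega)]
    have hlen := hgirth (mkCycle1 f s (s + β + β') hs (by omega)
      (by -- arcs
        intro t ht
        rw [hflt _ ht]
        by_cases ht1 : t + 1 < s
        · rw [hflt _ ht1, Function.iterate_succ_apply']
          exact hσ _
        · have hts : t + 1 = s := by omega
          rw [hfge _ (by omega), (by omega : t + 1 - s = 0), hqle _ (by omega),
            pos_zero, hst'1, ← hts, Function.iterate_succ_apply']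
          exact hσ _)
      (by -- edges
        intro t ht1 ht2
        rw [hfge _ ht1, hfge _ (by omega), (by omega : t + 1 - s = (t - s) + 1)]
        exact hq_edge _ (by omega))
      (by -- closed
        rw [hfge _ (by omega), hflt 0 (by omega), (by omega : s + β + β' - s = β + β')]
        rcases Nat.eq_zero_or_pos β with h0 | h0
        · rw [h0, Nat.zero_add, hqle _ le_rfl, hcol, h0, pos_zero, hst1]
          rfl
        · rw [hqgt _ (by omega), (by omega : β + β' - (β + β') = 0), pos_zero, hst1]
          rfl)
      (by -- arc injectivity
        intro t t' ht ht' hEq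
        rw [hflt _ ht, hflt _ ht'] at hEq
        exact lemA' hg hgirth σ hσ u t t' (by omega) (by omega) hEq)
      (by -- edge injectivity
        intro t t' ht1 ht2 ht3 ht4 hEq
        rw [hfge _ ht1, hfge _ ht3] at hEq
        have := hq_inj (t - s) (t' - s) (by omega) (by omega) hEq
        omega))
    rw [mkCycle1_len] at hlen
    omega

lemma lemSAME (hg : 5 ≤ g) (hgirth : ∀ c : MixedCycle G, g ≤ c.len)
    (h1 : ∀ v, G.Edge v (nb1 v)) (h2 : ∀ v, G.Edge v (nb2 v)) (h12 : ∀ v, nb1 v ≠ nb2 v)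
    (u : V) (st st' : V × V) (hst1 : st.1 = u) (hst'1 : st'.1 = u)
    (hne2 : st.2 ≠ st'.2) (hstE : G.Edge st.1 st.2) (hst'E : G.Edge st'.1 st'.2) :
    ∀ β β', 1 ≤ β → 1 ≤ β' → β + β' ≤ g - 1 →
      pos nb1 nb2 β' st' = pos nb1 nb2 β st → False := by
  intro β β' hb hb' hbound hcol
  set q : ℕ → V := fun t => if t ≤ β' then pos nb1 nb2 (β' - t) st' else pos nb1 nb2 (t - β') st
    with hqdef
  have hqle : ∀ t, t ≤ β' → q t = pos nb1 nb2 (β' - t) st' := by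
    intro t ht; simp only [hqdef]; rw [if_pos ht]
  have hqgt : ∀ t, β' < t → q t = pos nb1 nb2 (t - β') st := by
    intro t ht; simp only [hqdef]; rw [if_neg (by omega)]
  have hqst : ∀ t, β' ≤ t → q t = pos nb1 nb2 (t - β') st := by
    intro t ht
    rcases eq_or_lt_of_le ht with h | h
    · subst h
      rw [hqle _ le_rfl, (by omega : β' - β' = 0), pos_zero, pos_zero, hst'1, hst1]
    · exact hqgt _ h
  have hq_edge : ∀ r, r < β + β' → G.Edge (q r) (q (r+1)) := by
    intro r hr
    by_cases hr1 : r + 1 ≤ β'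
    · rw [hqle _ (by omega), hqle _ hr1]
      have hE := pos_edge nb1 nb2 h1 h2 st' hst'E (β' - (r+1))
      rw [(by omega : β' - (r+1) + 1 = β' - r)] at hE
      exact G.edge_symm hE
    · rw [hqst _ (by omega), hqgt _ (by omega), (by omega : r + 1 - β' = (r - β') + 1)]
      exact pos_edge nb1 nb2 h1 h2 st hstE _
  have hq_nb : ∀ t, t + 2 ≤ β + β' → q (t+2) ≠ q t := by
    intro t ht
    by_cases hc1 : t + 2 ≤ β'
    · rw [hqle _ hc1, hqle _ (by omega)]
      have := pos_nb nb1 nb2 h12 st' (β' - (t+2))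
      rw [(by omega : β' - (t+2) + 2 = β' - t)] at this
      exact this.symm
    · by_cases hc2 : t + 1 = β'
      · rw [hqgt (t+2) (by omega), hqle t (by omega), (by omega : t + 2 - β' = 1),
          (by omega : β' - t = 1), pos_one, pos_one]
        exact hne2
      · rw [hqst _ (by omega), hqst _ (by omega), (by omega : t + 2 - β' = (t - β') + 2)]
        exact pos_nb nb1 nb2 h12 st _
  have hq_inj := lemW hg hgirth q (β+β') (by omega) hq_edge hq_nb
  have h0 : q 0 = q (β + β') := by
    rw [hqle _ (by omega), hqgt _ (by omega), (by omega : β' - 0 = β'),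
      (by omega : β + β' - β' = β), hcol]
  have := hq_inj 0 (β+β') (by omega) le_rfl h0
  omega

end KeyLemmas

end Aux

namespace Aux

open Finset in
lemma sum_cnt (g : ℕ) : ∑ a ∈ range g, (2 * min a (g - 1 - a) + 1) = (g^2+1)/2 := by
  induction g using Nat.twoStepInduction with
  | zero => simp
  | one => simp
  | more n ih _ =>
    rw [Finset.sum_range_succ, Finset.sum_range_succ']
    have e1 : ∀ a, a < n → 2 * min (a+1) (n + 2 - 1 - (a+1)) + 1
        = (2 * min a (n - 1 - a) + 1) + 2 := by
      intro a ha
      have : n + 2 - 1 - (a + 1) = (n - 1 - a) + 1 := by omega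
      rw [this, Nat.succ_min_succ]; omega
    rw [Finset.sum_congr rfl (fun a ha => e1 a (Finset.mem_range.mp ha))]
    rw [Finset.sum_add_distrib, Finset.sum_const, ih]
    have e2 : (n+2)^2 = n^2 + 4*n + 4 := by ring
    rw [e2]
    have e3 : min (n+1) (n + 2 - 1 - (n+1)) = 0 := by omega
    rw [e3]
    simp only [Finset.card_range, smul_eq_mul]
    omega

theorem lower_bound {V : Type} [Fintype V] (G : MixedGraph V) (g : ℕ) (hg : 5 ≤ g)
    (h : IsMixedRZG G 2 1 g) : (g^2+1)/2 ≤ Nat.card V := by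
  classical
  obtain ⟨hEdeg, hAdeg, hgE, hgirth⟩ := h
  -- the arc successor function
  have hσex : ∀ v, ∃ u, G.Arc v u := by
    intro v
    have hcard := hAdeg v
    have hpos : 0 < Nat.card {u | G.Arc v u} := by omega
    obtain ⟨⟨a, ha⟩⟩ := (Nat.card_pos_iff.mp hpos).1
    exact ⟨a, ha⟩
  choose σ hσ using hσex
  -- two distinct neighbours
  have hnbex : ∀ v, ∃ a b, a ≠ b ∧ G.Edge v a ∧ G.Edge v b := by
    intro v
    have hcard := hEdeg v
    rw [Nat.card_coe_set_eq] at hcard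
    obtain ⟨a, b, hab, hset⟩ := Set.ncard_eq_two.mp hcard
    refine ⟨a, b, hab, ?_, ?_⟩
    · have : a ∈ {u | G.Edge v u} := by rw [hset]; simp
      exact this
    · have : b ∈ {u | G.Edge v u} := by rw [hset]; simp
      exact this
  choose nb1 nb2 h12 h1 h2 using hnbex
  -- base vertex
  obtain ⟨c0, -⟩ := hgE
  have : NeZero c0.len := ⟨c0.len_pos.ne'⟩
  set v0 : V := c0.vert 0 with hv0
  -- single-walk injectivity
  have posInj : ∀ st : V × V, G.Edge st.1 st.2 → ∀ i j, i ≤ g - 1 → j ≤ g - 1 →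
      pos nb1 nb2 i st = pos nb1 nb2 j st → i = j := by
    intro st hstE i j hi hj hEq
    exact lemW hg hgirth (fun t => pos nb1 nb2 t st) (g-1) le_rfl
      (fun t ht => pos_edge nb1 nb2 h1 h2 st hstE t)
      (fun t ht => pos_nb nb1 nb2 h12 st t) i j hi hj hEq
  -- the domain
  set D : Finset ((_ : ℕ) × ℤ) := (Finset.range g).sigma
      (fun a => Finset.Icc (-((min a (g-1-a) : ℕ) : ℤ)) ((min a (g-1-a) : ℕ) : ℤ)) with hD
  have hcardD : D.card = (g^2+1)/2 := by
    rw [hD, Finset.card_sigma]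
    have hcc : ∀ a ∈ Finset.range g,
        (Finset.Icc (-((min a (g-1-a) : ℕ) : ℤ)) ((min a (g-1-a) : ℕ) : ℤ)).card
          = 2 * min a (g-1-a) + 1 := by
      intro a _
      rw [Int.card_Icc]
      omega
    rw [Finset.sum_congr rfl hcc]
    exact sum_cnt g
  -- the map
  set st : ℕ → ℤ → V × V := fun a b =>
    (σ^[a] v0, if 0 < b then nb1 (σ^[a] v0) else nb2 (σ^[a] v0)) with hstdef
  have hstfst : ∀ a b, (st a b).1 = σ^[a] v0 := fun a b => rfl
  have hstedge : ∀ a b, G.Edge (st a b).1 (st a b).2 := by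
    intro a b
    simp only [hstdef]
    split
    · exact h1 _
    · exact h2 _
  set φ : (Σ _ : ℕ, ℤ) → V := fun p => pos nb1 nb2 p.2.natAbs (st p.1 p.2) with hφ
  have hinj : Set.InjOn φ ↑D := by
    rintro ⟨a, b⟩ hp ⟨a', b'⟩ hp' hEq
    simp only [hD, Finset.coe_sigma, Set.mem_sigma_iff, Finset.mem_coe, Finset.mem_range,
      Finset.mem_Icc] at hp hp'
    obtain ⟨ha, hb1, hb2⟩ := hp
    obtain ⟨ha', hb1', hb2'⟩ := hp'
    have hmle : min a (g-1-a) ≤ a ∧ min a (g-1-a) ≤ g-1-a :=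
      ⟨min_le_left _ _, min_le_right _ _⟩
    have hmle' : min a' (g-1-a') ≤ a' ∧ min a' (g-1-a') ≤ g-1-a' :=
      ⟨min_le_left _ _, min_le_right _ _⟩
    have hβ : b.natAbs ≤ min a (g-1-a) := by omega
    have hβ' : b'.natAbs ≤ min a' (g-1-a') := by omega
    simp only [hφ] at hEq
    rcases Nat.lt_trichotomy a a' with hlt | heq | hgt
    · exfalso
      refine lemKEY nb1 nb2 hg hgirth σ hσ h1 h2 h12 (b.natAbs + b'.natAbs)
        (σ^[a] v0) (a' - a) (st a b) (st a' b') (by omega) (hstfst a b) ?_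
        (hstedge a b) (hstedge a' b') b.natAbs b'.natAbs rfl (by omega) hEq.symm
      rw [hstfst, ← Function.iterate_add_apply]
      congr 1
      omega
    · subst heq
      have hbb : b = b' := by
        by_cases hsb : 0 < b
        · by_cases hsb' : 0 < b'
          · have hstEq : st a b = st a b' := by simp only [hstdef, if_pos hsb, if_pos hsb']
            rw [hstEq] at hEq
            have := posInj (st a b') (hstedge a b') _ _ (by omega) (by omega) hEq
            omega
          · exfalso
            rcases eq_or_lt_of_le (not_lt.mp hsb') with hz | hneg
            · have e0 : pos nb1 nb2 b'.natAbs (st a b') = pos nb1 nb2 0 (st a b) := by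
                rw [(by omega : b'.natAbs = 0), pos_zero, pos_zero]
              rw [e0] at hEq
              have := posInj (st a b) (hstedge a b) _ _ (by omega) (by omega) hEq
              omega
            · refine lemSAME nb1 nb2 hg hgirth h1 h2 h12 (σ^[a] v0) (st a b) (st a b')
                rfl rfl ?_ (hstedge a b) (hstedge a b') b.natAbs b'.natAbs
                (by omega) (by omega) (by omega) hEq.symm
              simp only [hstdef, if_pos hsb, if_neg hsb']
              exact h12 _
        · by_cases hsb' : 0 < b'
          · exfalso
            rcases eq_or_lt_of_le (not_lt.mp hsb) with hz | hneg
            · have e0 : pos nb1 nb2 b.natAbs (st a b) = pos nb1 nb2 0 (st a b') := by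
                rw [(by omega : b.natAbs = 0), pos_zero, pos_zero]
              rw [e0] at hEq
              have := posInj (st a b') (hstedge a b') _ _ (by omega) (by omega) hEq.symm
              omega
            · refine lemSAME nb1 nb2 hg hgirth h1 h2 h12 (σ^[a] v0) (st a b') (st a b)
                rfl rfl ?_ (hstedge a b') (hstedge a b) b'.natAbs b.natAbs
                (by omega) (by omega) (by omega) hEq
              simp only [hstdef, if_pos hsb', if_neg hsb]
              exact h12 _
          · have hstEq : st a b = st a b' := by simp only [hstdef, if_neg hsb, if_neg hsb']
            rw [hstEq] at hEq
            have := posInj (st a b') (hstedge a b') _ _ (by omega) (by omega) hEq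
            omega
      rw [hbb]
    · exfalso
      refine lemKEY nb1 nb2 hg hgirth σ hσ h1 h2 h12 (b'.natAbs + b.natAbs)
        (σ^[a'] v0) (a - a') (st a' b') (st a b) (by omega) (hstfst a' b') ?_
        (hstedge a' b') (hstedge a b) b'.natAbs b.natAbs rfl (by omega) hEq
      rw [hstfst, ← Function.iterate_add_apply]
      congr 1
      omega
  have hcard : D.card ≤ Fintype.card V := by
    rw [← Finset.card_univ]
    exact Finset.card_le_card_of_injOn φ (fun _ _ => Finset.mem_univ _) hinj
  rw [Nat.card_eq_fintype_card]
  omega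

end Aux

namespace Aux

section Construction

/-- number of vertices -/
def Cn (g : ℕ) : ℕ := (g^2+1)/2
/-- arc shift -/
def tt (g : ℕ) : ℕ := if Odd g then g else g - 1

lemma basics (g : ℕ) (hg : 5 ≤ g) :
    g < Cn g ∧ (g/2) * tt g + (g - g/2) = Cn g ∧ 4 ≤ tt g ∧ tt g ≤ g := by
  have hsq : g^2 = g*g := sq g
  rcases Nat.even_or_odd g with he | ho
  · obtain ⟨h, hh⟩ := he
    have ht : tt g = g - 1 := by
      rw [tt, if_neg (by simp [Nat.odd_iff, hh]; omega)]
    have h3 : 3 ≤ h := by omega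
    have hgg : g*g = 4*(h*h) := by subst hh; ring
    have hCn : Cn g = 2*(h*h) := by rw [Cn, hsq]; omega
    have hhh : 3*h ≤ h*h := Nat.mul_le_mul_right h (by omega)
    refine ⟨by omega, ?_, by omega, by omega⟩
    have ha0 : g/2 = h := by omega
    rw [ha0, ht, hCn]
    subst hh
    zify [show 1 ≤ h + h by omega, show h ≤ h + h by omega]
    ring
  · obtain ⟨h, hh⟩ := ho
    have ht : tt g = g := by rw [tt, if_pos ⟨h, by omega⟩]
    have h2 : 2 ≤ h := by omega
    have hgg : g*g = 4*(h*h) + 4*h + 1 := by subst hh; ring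
    have hCn : Cn g = 2*(h*h) + 2*h + 1 := by rw [Cn, hsq]; omega
    have hhh : 2*h ≤ h*h := Nat.mul_le_mul_right h (by omega)
    refine ⟨by omega, ?_, by omega, by omega⟩
    have ha0 : g/2 = h := by omega
    rw [ha0, ht, hCn]
    subst hh
    zify [show h ≤ 2*h+1 by omega]
    ring

set_option maxHeartbeats 1000000 in
lemma ntLemma (g : ℕ) (hg : 5 ≤ g) (a x : ℤ) (ha : 1 ≤ a)
    (hdvd : ((Cn g : ℕ) : ℤ) ∣ (a * (tt g : ℕ) + x)) : (g:ℤ) ≤ a + |x| := by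
  by_contra hlt
  push_neg at hlt
  obtain ⟨w, hw⟩ := hdvd
  have hxabs1 : x ≤ |x| := le_abs_self x
  have hxabs2 : -x ≤ |x| := by rw [← abs_neg]; exact le_abs_self (-x)
  have habs0 : 0 ≤ |x| := abs_nonneg x
  rcases Nat.even_or_odd g with he | ho
  · -- even case, tt g = g - 1, Cn g = 2 h²
    obtain ⟨h, hh⟩ := he
    have h3 : 3 ≤ h := by omega
    have ht : tt g = g - 1 := by
      rw [tt, if_neg (by simp [Nat.odd_iff, hh]; omega)]
    have hsq : g^2 = g*g := sq g
    have hgg : g*g = 4*(h*h) := by rw [hh]; ring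
    have hCnN : Cn g = 2*(h*h) := by rw [Cn, hsq]; omega
    have htZ : ((tt g : ℕ) : ℤ) = 2*(h:ℤ) - 1 := by
      have : tt g = 2*h - 1 := by omega
      rw [this]; push_cast [show 1 ≤ 2*h by omega]; ring
    have hNZ : ((Cn g : ℕ) : ℤ) = 2*((h:ℤ)*(h:ℤ)) := by
      rw [hCnN]; push_cast; ring
    rw [htZ, hNZ] at hw
    -- 2h ∣ x - a
    have hdvd2 : (2*(h:ℤ)) ∣ (x - a) := ⟨(h:ℤ)*w - a, by linear_combination hw⟩
    have hsmall : |x - a| < 2*(h:ℤ) := by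
      have : |x - a| ≤ |x| + |a| := abs_sub _ _
      rw [abs_of_nonneg (by omega : (0:ℤ) ≤ a)] at this
      omega
    have hxa : x - a = 0 := Int.eq_zero_of_abs_lt_dvd hdvd2 hsmall
    have hxa' : x = a := by omega
    -- now a = h * w
    have haw : a = (h:ℤ) * w := by
      have h2h : (2*(h:ℤ)) ≠ 0 := by
        intro hc; omega
      apply mul_left_cancel₀ h2h
      linear_combination hw - hxa
    have hw1 : 1 ≤ w := by
      by_contra hwc
      push_neg at hwc
      have : (h:ℤ) * w ≤ 0 := mul_nonpos_of_nonneg_of_nonpos (by positivity) (by omega)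
      omega
    have hah : (h:ℤ) ≤ a := by
      rw [haw]
      nlinarith
    have : |x| = a := by rw [hxa', abs_of_nonneg (by omega)]
    omega
  · -- odd case, tt g = g, 2 Cn g = g² + 1
    obtain ⟨h, hh⟩ := ho
    have ht : tt g = g := by rw [tt, if_pos ⟨h, by omega⟩]
    have hsq : g^2 = g*g := sq g
    have hgg : g*g = 4*(h*h) + 4*h + 1 := by rw [hh]; ring
    have hCnN : Cn g = 2*(h*h) + 2*h + 1 := by rw [Cn, hsq]; omega
    have h2N : 2*((Cn g : ℕ) : ℤ) = (g:ℤ)^2 + 1 := by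
      have hN : 2 * Cn g = g^2 + 1 := by rw [hCnN, hsq]; omega
      zify at hN
      linarith
    have htZ : ((tt g : ℕ) : ℤ) = (g:ℤ) := by rw [ht]
    rw [htZ] at hw
    set N : ℤ := ((Cn g : ℕ) : ℤ) with hNdef
    have hNpos : 0 < N := by
      have : 0 < Cn g := by omega
      omega
    set u : ℤ := (g:ℤ)*w - 2*a with hudef
    have hu : (g:ℤ)*x - a = N*u := by
      rw [hudef]; linear_combination (g:ℤ)*hw + a*h2N
    -- |w| ≤ 1
    have hwb : -1 ≤ w ∧ w ≤ 1 := by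
      have h1' : |N*w| ≤ (g:ℤ)^2 - 1 := by
        rw [← hw]
        have : |a*(g:ℤ) + x| ≤ |a*(g:ℤ)| + |x| := abs_add_le _ _
        rw [abs_mul, abs_of_nonneg (by omega : (0:ℤ) ≤ a),
          abs_of_nonneg (by positivity : (0:ℤ) ≤ (g:ℤ))] at this
        have hax : a * (g:ℤ) ≤ (g-1) * g := by
          apply mul_le_mul_of_nonneg_right (by omega) (by positivity)
        nlinarith
      rw [abs_mul, abs_of_nonneg (by omega : (0:ℤ) ≤ N)] at h1'
      have hlt2 : |w| < 2 := by
        have hx2 : N * |w| < N * 2 := by linarith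
        exact lt_of_mul_lt_mul_left hx2 (by omega)
      obtain ⟨hc1, hc2⟩ := abs_lt.mp hlt2
      omega
    have hub : -1 ≤ u ∧ u ≤ 1 := by
      have h1' : |N*u| ≤ (g:ℤ)^2 - 1 := by
        rw [← hu]
        have : |(g:ℤ)*x - a| ≤ |(g:ℤ)*x| + |a| := abs_sub _ _
        rw [abs_mul, abs_of_nonneg (by omega : (0:ℤ) ≤ a),
          abs_of_nonneg (by positivity : (0:ℤ) ≤ (g:ℤ))] at this
        have hax : (g:ℤ) * |x| ≤ (g:ℤ) * (g - 1 - a) := by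
          apply mul_le_mul_of_nonneg_left (by omega) (by positivity)
        nlinarith
      rw [abs_mul, abs_of_nonneg (by omega : (0:ℤ) ≤ N)] at h1'
      have hlt2 : |u| < 2 := by
        have hx2 : N * |u| < N * 2 := by linarith
        exact lt_of_mul_lt_mul_left hx2 (by omega)
      obtain ⟨hc1, hc2⟩ := abs_lt.mp hlt2
      omega
    have h2x : 2*x = w + (g:ℤ)*u := by
      rw [hudef]; linear_combination 2*hw + w*h2N
    have h2a : 2*a = (g:ℤ)*w - u := by rw [hudef]; ring
    have hgodd : (g:ℤ) % 2 = 1 := by omega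
    obtain ⟨hu1, hu2⟩ := hub
    obtain ⟨hw1, hw2⟩ := hwb
    interval_cases u <;> interval_cases w <;> omega

/-- The extremal graph: a circulant mixed graph on `ZMod (Cn g)`. -/
def Gc (g : ℕ) (hg : 5 ≤ g) : MixedGraph (ZMod (Cn g)) :=
  { Edge := fun u w => w = u + 1 ∨ u = w + 1
    Arc := fun u w => w = u + ((tt g : ℕ) : ZMod (Cn g))
    edge_symm := fun h => Or.symm h
    edge_irrefl := by
      intro v h
      have hb := basics g hg
      have hNZ : NeZero (Cn g) := ⟨by omega⟩
      have h1 : ((1 : ℕ) : ZMod (Cn g)) = 0 := by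
        rcases h with h | h <;>
        · push_cast
          linear_combination -h
      rw [ZMod.natCast_eq_zero_iff] at h1
      have := Nat.le_of_dvd one_pos h1
      omega
    arc_irrefl := by
      intro v h
      have hb := basics g hg
      have hNZ : NeZero (Cn g) := ⟨by omega⟩
      have h1 : ((tt g : ℕ) : ZMod (Cn g)) = 0 := by linear_combination h.symm
      rw [ZMod.natCast_eq_zero_iff] at h1
      have := Nat.le_of_dvd (by omega) h1
      omega }

lemma Gc_edge_card (g : ℕ) (hg : 5 ≤ g) (v : ZMod (Cn g)) :
    Nat.card {u | (Gc g hg).Edge v u} = 2 := by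
  have hb := basics g hg
  have hNZ : NeZero (Cn g) := ⟨by omega⟩
  have hset : {u | (Gc g hg).Edge v u} = {v + 1, v - 1} := by
    ext u
    show (u = v + 1 ∨ v = u + 1) ↔ _
    simp only [Set.mem_insert_iff, Set.mem_singleton_iff]
    constructor
    · rintro (h | h)
      · exact Or.inl h
      · right; rw [h]; ring
    · rintro (h | h)
      · exact Or.inl h
      · right; rw [h]; ring
  rw [hset, Nat.card_coe_set_eq]
  apply Set.ncard_pair
  intro hc
  have h2 : ((2 : ℕ) : ZMod (Cn g)) = 0 := by push_cast; linear_combination hc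
  rw [ZMod.natCast_eq_zero_iff] at h2
  have := Nat.le_of_dvd (by omega) h2
  omega

lemma Gc_arc_card (g : ℕ) (hg : 5 ≤ g) (v : ZMod (Cn g)) :
    Nat.card {u | (Gc g hg).Arc v u} = 1 := by
  have hset : {u | (Gc g hg).Arc v u} = {v + ((tt g : ℕ) : ZMod (Cn g))} := by
    ext u
    show u = _ ↔ _
    simp [Set.mem_singleton_iff]
  rw [hset, Nat.card_coe_set_eq, Set.ncard_singleton]

set_option maxHeartbeats 1000000 in
lemma Gc_girth_ge (g : ℕ) (hg : 5 ≤ g) (c : MixedCycle (Gc g hg)) : g ≤ c.len := by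
  classical
  obtain ⟨hgn, hkey, ht4, htg⟩ := basics g hg
  have hNZ : NeZero (Cn g) := ⟨by omega⟩
  have hlNZ : NeZero c.len := ⟨c.len_pos.ne'⟩
  set d : ZMod c.len → ℤ := fun i => if c.useArc i = true then ((tt g : ℕ) : ℤ) else
    (if c.vert (i+1) = c.vert i + 1 then 1 else -1) with hd
  have hstep : ∀ i, c.vert (i+1) = c.vert i + ((d i : ℤ) : ZMod (Cn g)) := by
    intro i
    by_cases hi : c.useArc i = true
    · have := c.step_arc i hi
      simp only [hd, if_pos hi]
      push_cast
      exact this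
    · have hstep := c.step_edge i (by simpa using hi)
      simp only [hd, if_neg hi]
      by_cases hv : c.vert (i+1) = c.vert i + 1
      · rw [if_pos hv]; push_cast; exact hv
      · rw [if_neg hv]
        rcases hstep with h | h
        · exact absurd h hv
        · push_cast
          rw [h]; ring
  have hsum0 : ((∑ i, d i : ℤ) : ZMod (Cn g)) = 0 := by
    rw [Int.cast_sum]
    have : ∀ i, ((d i : ℤ) : ZMod (Cn g)) = c.vert (i+1) - c.vert i := by
      intro i; rw [hstep i]; ring
    rw [Finset.sum_congr rfl (fun i _ => this i), Finset.sum_sub_distrib]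
    have : ∑ i : ZMod c.len, c.vert (i+1) = ∑ i : ZMod c.len, c.vert i :=
      Fintype.sum_equiv (Equiv.addRight (1 : ZMod c.len)) _ _ (fun i => rfl)
    rw [this, sub_self]
  rw [ZMod.intCast_zmod_eq_zero_iff_dvd] at hsum0
  set A := (Finset.univ.filter (fun i => c.useArc i = true)).card with hA
  set S := ∑ i ∈ (Finset.univ.filter (fun i => ¬ c.useArc i = true)), d i with hS
  set E := (Finset.univ.filter (fun i => ¬ c.useArc i = true)).card with hE
  have hAE : A + E = c.len := by
    rw [hA, hE, Finset.card_filter_add_card_filter_not, Finset.card_univ]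
    exact ZMod.card c.len
  have hsplit : ∑ i, d i = (A : ℤ) * ((tt g : ℕ) : ℤ) + S := by
    rw [← Finset.sum_filter_add_sum_filter_not Finset.univ (fun i => c.useArc i = true) d]
    congr 1
    have harc : ∀ i ∈ Finset.univ.filter (fun i => c.useArc i = true),
        d i = ((tt g : ℕ) : ℤ) := by
      intro i hi
      rw [hd]
      simp only [if_pos (Finset.mem_filter.mp hi).2]
    rw [Finset.sum_congr rfl harc, Finset.sum_const]
    simp [hA, mul_comm]
  have hSbound : |S| ≤ (E : ℤ) := by
    calc |S| ≤ ∑ i ∈ (Finset.univ.filter (fun i => ¬ c.useArc i = true)), |d i| :=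
        Finset.abs_sum_le_sum_abs _ _
    _ = (E : ℤ) := by
        have habs1 : ∀ i ∈ Finset.univ.filter (fun i => ¬ c.useArc i = true), |d i| = 1 := by
          intro i hi
          have hni := (Finset.mem_filter.mp hi).2
          rw [hd]
          simp only [if_neg hni]
          split <;> simp
        rw [Finset.sum_congr rfl habs1, Finset.sum_const]
        simp [hE, mul_comm]
  rcases Nat.eq_zero_or_pos A with hA0 | hApos
  · -- no arcs
    have hallF : ∀ i, c.useArc i = false := by
      intro i
      by_contra hc
      have hmem : i ∈ Finset.univ.filter (fun i => c.useArc i = true) :=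
        Finset.mem_filter.mpr ⟨Finset.mem_univ _, by simpa using hc⟩
      rw [hA] at hA0
      rw [Finset.card_eq_zero] at hA0
      rw [hA0] at hmem
      exact absurd hmem (Finset.notMem_empty _)
    by_cases hconst : ∀ i, d (i+1) = d i
    · -- constant direction: sum = ± len
      have hconst' : ∀ i, d i = d 0 := by
        have key : ∀ (k : ℕ), d ((k : ZMod c.len)) = d 0 := by
          intro k
          induction k with
          | zero => norm_num
          | succ m ih =>
            have := hconst ((m : ZMod c.len))
            rw [ih] at this
            rw [← this]
            push_cast
            ring_nf
        intro i
        have : i = ((i.val : ℕ) : ZMod c.len) := (ZMod.natCast_rightInverse i).symm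
        rw [this, key]
      have hsum : ∑ i, d i = (c.len : ℤ) * d 0 := by
        rw [Finset.sum_congr rfl (fun i _ => hconst' i), Finset.sum_const, Finset.card_univ,
          ZMod.card]
        simp
      have hd0 : d 0 = 1 ∨ d 0 = -1 := by
        rw [hd]; simp only [if_neg (by simp [hallF 0] : ¬ c.useArc 0 = true)]
        split <;> simp
      rw [hsum] at hsum0
      have hlen1 : 1 ≤ c.len := c.len_pos
      have habs : ((Cn g : ℕ) : ℤ) ∣ (c.len : ℤ) := by
        rcases hd0 with h | h <;> rw [h] at hsum0 <;>
          [simpa using hsum0;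
           · rw [show (c.len : ℤ) * (-1) = -(c.len : ℤ) by ring] at hsum0
             exact (dvd_neg.mp hsum0)]
      have := Int.le_of_dvd (by omega) habs
      omega
    · -- a sign change gives a repeated edge
      push_neg at hconst
      obtain ⟨i, hne⟩ := hconst
      have hdi : d i = 1 ∨ d i = -1 := by
        rw [hd]; simp only [if_neg (by simp [hallF i] : ¬ c.useArc i = true)]
        split <;> simp
      have hdi1 : d (i+1) = 1 ∨ d (i+1) = -1 := by
        rw [hd]; simp only [if_neg (by simp [hallF (i+1)] : ¬ c.useArc (i+1) = true)]
        split <;> simp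
      have hzero : d i + d (i+1) = 0 := by
        rcases hdi with h | h <;> rcases hdi1 with h' | h' <;> omega
      have hvv : c.vert (i+1+1) = c.vert i := by
        rw [hstep (i+1), hstep i]
        have : (((d i : ℤ)) : ZMod (Cn g)) + ((d (i+1) : ℤ) : ZMod (Cn g)) = 0 := by
          push_cast [← Int.cast_add, hzero]
          simp
        linear_combination this
      have := c.edge_once i (i+1) (hallF i) (hallF (i+1)) (Or.inr ⟨hvv.symm, rfl⟩)
      exact absurd (congrArg d this) (Ne.symm hne)
  · -- at least one arc: number theory
    have hnt := ntLemma g hg (A : ℤ) S (by omega) (by rw [← hsplit]; exact hsum0)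
    have : (g : ℤ) ≤ (A : ℤ) + (E : ℤ) := by omega
    omega

set_option maxHeartbeats 1000000 in
lemma Gc_cycle (g : ℕ) (hg : 5 ≤ g) : ∃ c : MixedCycle (Gc g hg), c.len = g := by
  classical
  obtain ⟨hgn, hkey, ht4, htg⟩ := basics g hg
  have hNZ : NeZero (Cn g) := ⟨by omega⟩
  set a₀ := g/2 with ha₀
  have ha1 : 2 ≤ a₀ := by omega
  have ha2 : a₀ + 2 ≤ g := by omega
  set F : ℕ → ℕ := fun v => if v < a₀ then v * tt g else a₀ * tt g + (v - a₀) with hF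
  set f : ℕ → ZMod (Cn g) := fun v => ((F v : ℕ) : ZMod (Cn g)) with hf
  have ha0t : a₀ * tt g + (g - a₀) = Cn g := hkey
  have hFlt : ∀ v, v < g → F v < Cn g := by
    intro v hv
    rw [hF]
    dsimp only
    split
    · have h1 : v * tt g ≤ a₀ * tt g := Nat.mul_le_mul_right _ (by omega)
      omega
    · omega
  have hFval : ∀ v, v < g → (f v).val = F v := by
    intro v hv
    rw [hf]
    exact ZMod.val_cast_of_lt (hFlt v hv)
  have hFinj : ∀ v v', v < g → v' < g → f v = f v' → v = v' := by
    intro v v' hv hv' hEq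
    have := congrArg ZMod.val hEq
    rw [hFval v hv, hFval v' hv'] at this
    rw [hF] at this
    simp only at this
    rcases Nat.lt_or_ge v a₀ with h | h <;> rcases Nat.lt_or_ge v' a₀ with h' | h'
    · rw [if_pos h, if_pos h'] at this
      exact Nat.eq_of_mul_eq_mul_right (by omega) this
    · rw [if_pos h, if_neg (by omega)] at this
      exfalso
      have hvt : v * tt g + tt g ≤ a₀ * tt g := by
        have := Nat.mul_le_mul_right (tt g) (show v + 1 ≤ a₀ by omega)
        calc v * tt g + tt g = (v+1) * tt g := by ring
        _ ≤ a₀ * tt g := this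
      omega
    · rw [if_neg (by omega), if_pos h'] at this
      exfalso
      have hvt : v' * tt g + tt g ≤ a₀ * tt g := by
        have := Nat.mul_le_mul_right (tt g) (show v' + 1 ≤ a₀ by omega)
        calc v' * tt g + tt g = (v'+1) * tt g := by ring
        _ ≤ a₀ * tt g := this
      omega
    · rw [if_neg (by omega), if_neg (by omega)] at this
      omega
  have hApos : 1 ≤ a₀ * tt g := Nat.one_le_iff_ne_zero.mpr (by positivity)
  refine ⟨mkCycle1 f a₀ g (by omega) (by omega) ?harc ?hedge ?hclosed ?hinj1 ?hinj2, ?_⟩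
  case harc =>
    intro j hj
    show f (j+1) = f j + ((tt g : ℕ) : ZMod (Cn g))
    have hfj : f j = ((j * tt g : ℕ) : ZMod (Cn g)) := by
      rw [hf, hF]; simp only [if_pos hj]
    have hfj1 : f (j+1) = (((j+1) * tt g : ℕ) : ZMod (Cn g)) := by
      rcases Nat.lt_or_ge (j+1) a₀ with h | h
      · rw [hf, hF]; simp only [if_pos h]
      · have hja : j + 1 = a₀ := by omega
        rw [hf, hF]
        simp only [if_neg (by omega : ¬ j + 1 < a₀)]
        rw [hja]
        simp
    rw [hfj, hfj1]
    push_cast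
    ring
  case hedge =>
    intro j hj1 hj2
    show f (j+1) = f j + 1 ∨ f j = f (j+1) + 1
    left
    have hfj : f j = ((a₀ * tt g + (j - a₀) : ℕ) : ZMod (Cn g)) := by
      rw [hf, hF]; simp only [if_neg (by omega : ¬ j < a₀)]
    have hfj1 : f (j+1) = ((a₀ * tt g + (j - a₀) + 1 : ℕ) : ZMod (Cn g)) := by
      rw [hf, hF]
      simp only [if_neg (by omega : ¬ j + 1 < a₀)]
      congr 1
      omega
    rw [hfj, hfj1]
    push_cast
    ring
  case hclosed =>
    show f g = f 0
    have h1 : f g = ((Cn g : ℕ) : ZMod (Cn g)) := by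
      rw [hf, hF]
      simp only [if_neg (by omega : ¬ g < a₀)]
      rw [show a₀ * tt g + (g - a₀) = Cn g by omega]
    have h2 : f 0 = 0 := by
      rw [hf, hF]
      simp only [if_pos (by omega : 0 < a₀)]
      simp
    rw [h1, h2, ZMod.natCast_self]
  case hinj1 =>
    intro v v' hv hv' hEq
    exact hFinj v v' (by omega) (by omega) hEq
  case hinj2 =>
    intro v v' hv1 hv2 hv3 hv4 hEq
    rcases eq_or_lt_of_le hv2 with hvg | hvg <;> rcases eq_or_lt_of_le hv4 with hvg' | hvg'
    · omega
    · exfalso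
      have h1 : f g = 0 := by
        have : f g = ((Cn g : ℕ) : ZMod (Cn g)) := by
          rw [hf, hF]
          simp only [if_neg (by omega : ¬ g < a₀)]
          rw [show a₀ * tt g + (g - a₀) = Cn g by omega]
        rw [this, ZMod.natCast_self]
      rw [hvg] at hEq
      rw [h1] at hEq
      have := congrArg ZMod.val hEq.symm
      rw [hFval v' hvg'] at this
      rw [hF] at this
      simp only [if_neg (by omega : ¬ v' < a₀)] at this
      simp [ZMod.val_zero] at this
      omega
    · exfalso
      have h1 : f g = 0 := by
        have : f g = ((Cn g : ℕ) : ZMod (Cn g)) := by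
          rw [hf, hF]
          simp only [if_neg (by omega : ¬ g < a₀)]
          rw [show a₀ * tt g + (g - a₀) = Cn g by omega]
        rw [this, ZMod.natCast_self]
      rw [hvg'] at hEq
      rw [h1] at hEq
      have := congrArg ZMod.val hEq
      rw [hFval v hvg] at this
      rw [hF] at this
      simp only [if_neg (by omega : ¬ v < a₀)] at this
      simp [ZMod.val_zero] at this
      omega
    · exact hFinj v v' hvg hvg' hEq
  · rw [mkCycle1_len]

theorem exists_good (g : ℕ) (hg : 5 ≤ g) :
    ∃ (V : Type) (_ : Fintype V) (G : MixedGraph V),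
      Nat.card V = Cn g ∧ IsMixedRZG G 2 1 g := by
  have hb := basics g hg
  have hNZ : NeZero (Cn g) := ⟨by omega⟩
  refine ⟨ZMod (Cn g), ZMod.fintype (Cn g), Gc g hg, Nat.card_zmod _, ?_, ?_, ?_, ?_⟩
  · exact Gc_edge_card g hg
  · exact Gc_arc_card g hg
  · exact Gc_cycle g hg
  · exact Gc_girth_ge g hg

end Construction

end Aux

/-- `f(2,1,g) = (g^2+1)/2` for odd `g` and `g^2/2` for even `g`, for every `g ≥ 5`. -/
theorem f_2_1_g (g : ℕ) (hg : 5 ≤ g) :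
    (∃ (V : Type) (_ : Fintype V) (G : MixedGraph V),
      Nat.card V = (if Odd g then (g ^ 2 + 1) / 2 else g ^ 2 / 2) ∧ IsMixedRZG G 2 1 g) ∧
    (∀ (V : Type) [Fintype V] (G : MixedGraph V),
      IsMixedRZG G 2 1 g → (if Odd g then (g ^ 2 + 1) / 2 else g ^ 2 / 2) ≤ Nat.card V) := by
  have hif : (if Odd g then (g ^ 2 + 1) / 2 else g ^ 2 / 2) = Aux.Cn g := by
    rw [Aux.Cn]
    by_cases h : Odd g
    · rw [if_pos h]
    · rw [if_neg h]
      obtain ⟨k, hk⟩ := Nat.not_odd_iff_even.mp h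
      have e : g^2 = 2*(2*(k*k)) := by rw [hk]; ring
      omega
  rw [hif]
  constructor
  · exact Aux.exists_good g hg
  · intro V _ G h
    exact Aux.lower_bound G g hg h
end

section
/- The lexicographic product of the directed g-cycle with the complete graph K_2 is a (1,2,g)-graph on 2g vertices: the mixed graph on vertices {v_{i,j} : 0 ≤ i < g, j ∈ {0,1}} with undirected edges v_{i,0}v_{i,1} for all i and arcs from v_{i,j} to v_{i+1,j'} (indices modulo g) for all i and all j, j' ∈ {0,1} has every vertex incident with exactly 1 undirected edge, every vertex of out-degree exactly 2, and girth exactly g. -/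
/-- The lexicographic product `C⃗_g[K_2]`, with vertices `(i,j)` for `i ∈ ZMod g`,
`j ∈ Fin 2`, undirected edges joining `(i,0)` and `(i,1)`, and arcs from `(i,j)` to
`(i+1,j')`, is a `(1,2,g)`-graph on `2g` vertices. -/
theorem cycle_lex_K2 (g : ℕ) (hg : 5 ≤ g) (G : MixedGraph (ZMod g × Fin 2))
    (hE : ∀ a b, G.Edge a b ↔ a.1 = b.1 ∧ a.2 ≠ b.2)
    (hA : ∀ a b, G.Arc a b ↔ b.1 = a.1 + 1) :
    IsMixedRZG G 1 2 g ∧ Nat.card (ZMod g × Fin 2) = 2 * g := by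
  haveI : NeZero g := ⟨by omega⟩
  constructor
  · refine ⟨?_, ?_, ?_, ?_⟩
    · -- edge degree 1
      intro v
      have hset : {u | G.Edge v u} = {(v.1, ⟨1 - v.2.val, by omega⟩)} := by
        ext u
        simp only [Set.mem_setOf_eq, Set.mem_singleton_iff, hE]
        constructor
        · rintro ⟨h1, h2⟩
          have h2' : v.2.val ≠ u.2.val := fun h => h2 (Fin.ext h)
          have hv := v.2.isLt; have hu := u.2.isLt
          exact Prod.ext h1.symm (Fin.ext (by simp; omega))
        · rintro rfl
          refine ⟨rfl, fun h => ?_⟩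
          have := congrArg Fin.val h
          have hv := v.2.isLt
          simp at this
          omega
      rw [hset, Nat.card_coe_set_eq, Set.ncard_singleton]
    · -- out-degree 2
      intro v
      have hset : {u | G.Arc v u} = {(v.1 + 1, 0), (v.1 + 1, 1)} := by
        ext u
        simp only [Set.mem_setOf_eq, Set.mem_insert_iff, Set.mem_singleton_iff, hA]
        constructor
        · intro h
          by_cases h0 : u.2.val = 0
          · left; exact Prod.ext h (Fin.ext (by simpa using h0))
          · right
            refine Prod.ext h (Fin.ext ?_)
            have := u.2.isLt
            simp
            omega
        · rintro (rfl | rfl) <;> rfl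
      rw [hset, Nat.card_coe_set_eq, Set.ncard_pair]
      intro h
      have := congrArg (fun p => (Prod.snd p : Fin 2).val) h
      simp at this
    · -- cycle of length g exists
      exact ⟨⟨g, by omega, fun i => (i, 0), fun _ => true,
        fun i _ => by rw [hA],
        fun i h => by simp at h,
        fun i j _ _ h _ => (Prod.ext_iff.mp h).1,
        fun i j hi _ _ => by simp at hi⟩, rfl⟩
    · -- no shorter cycle
      intro c
      haveI : NeZero c.len := ⟨c.len_pos.ne'⟩
      by_cases hA0 : ∀ i : ZMod c.len, c.useArc i = false
      · exfalso
        have key : c.vert (0 + 1 + 1) = c.vert 0 := by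
          have e1 := c.step_edge 0 (hA0 0)
          have e2 := c.step_edge (0 + 1) (hA0 _)
          rw [hE] at e1 e2
          obtain ⟨f1, s1⟩ := e1
          obtain ⟨f2, s2⟩ := e2
          have s1' : (c.vert 0).2.val ≠ (c.vert (0 + 1)).2.val := fun h => s1 (Fin.ext h)
          have s2' : (c.vert (0 + 1)).2.val ≠ (c.vert (0 + 1 + 1)).2.val :=
            fun h => s2 (Fin.ext h)
          have h1 := (c.vert 0).2.isLt
          have h2 := (c.vert (0 + 1)).2.isLt
          have h3 := (c.vert (0 + 1 + 1)).2.isLt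
          exact Prod.ext (f1.trans f2).symm (Fin.ext (by omega))
        have h01 : (0 : ZMod c.len) = 0 + 1 := by
          apply c.edge_once 0 (0 + 1) (hA0 _) (hA0 _)
          right
          exact ⟨key.symm, rfl⟩
        have hone : ((1 : ℕ) : ZMod c.len) = 0 := by
          rw [Nat.cast_one]
          rw [zero_add] at h01
          exact h01.symm
        have hdvd : c.len ∣ 1 := by
          rwa [ZMod.natCast_eq_zero_iff] at hone
        have hn1 : c.len = 1 := Nat.dvd_one.mp hdvd
        haveI : Subsingleton (ZMod c.len) := by rw [hn1]; infer_instance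
        have e := c.step_edge 0 (hA0 0)
        rw [Subsingleton.elim ((0 : ZMod c.len) + 1) 0] at e
        exact G.edge_irrefl _ e
      · push_neg at hA0
        obtain ⟨i0, hi0⟩ := hA0
        have hi0' : c.useArc i0 = true := by
          cases h : c.useArc i0
          · exact absurd h hi0
          · rfl
        have hterm : ∀ i : ZMod c.len, ((c.vert (i + 1)).1 - (c.vert i).1 : ZMod g)
            = if c.useArc i = true then (1 : ZMod g) else 0 := by
          intro i
          cases h : c.useArc i
          · have := c.step_edge i h
            rw [hE] at this
            simp [← this.1]
          · have := c.step_arc i h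
            rw [hA] at this
            simp [this]
        have hsum : ∑ i : ZMod c.len, ((c.vert (i + 1)).1 - (c.vert i).1 : ZMod g) = 0 := by
          rw [Finset.sum_sub_distrib, sub_eq_zero]
          exact Fintype.sum_equiv (Equiv.addRight (1 : ZMod c.len)) _ _ (fun i => rfl)
        have h2 : (((Finset.univ.filter fun i : ZMod c.len => c.useArc i = true).card : ℕ)
            : ZMod g) = 0 := by
          have hs : ∑ i : ZMod c.len, (if c.useArc i = true then (1 : ZMod g) else 0) = 0 :=
            (Finset.sum_congr rfl fun i _ => (hterm i).symm).trans hsum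
          rw [Finset.sum_boole] at hs
          exact hs
        have hdvd : g ∣ (Finset.univ.filter fun i : ZMod c.len => c.useArc i = true).card := by
          rwa [ZMod.natCast_eq_zero_iff] at h2
        have hpos : 0 < (Finset.univ.filter fun i : ZMod c.len => c.useArc i = true).card :=
          Finset.card_pos.mpr ⟨i0, Finset.mem_filter.mpr ⟨Finset.mem_univ _, hi0'⟩⟩
        have hle : (Finset.univ.filter fun i : ZMod c.len => c.useArc i = true).card
            ≤ c.len := by
          calc _ ≤ Finset.univ.card := Finset.card_filter_le _ _
          _ = Fintype.card (ZMod c.len) := rfl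
          _ = c.len := ZMod.card c.len
        exact le_trans (Nat.le_of_dvd hpos hdvd) hle
  · rw [Nat.card_prod, Nat.card_zmod, Nat.card_eq_fintype_card, Fintype.card_fin, mul_comm]
end

section
/- For all integers g ≥ 5 and 1 ≤ z ≤ g, there exists a (2,z,g)-graph with exactly g² vertices. -/
section Aux

variable (g z : ℕ)

lemma aux_dvd_of_cast_zero (hg : 5 ≤ g) {a : ℕ} (h : ((a:ℕ) : ZMod g) = 0) : g ∣ a := by
  haveI : NeZero g := ⟨by omega⟩
  exact (ZMod.natCast_eq_zero_iff a g).mp h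

lemma aux_one_ne (hg : 5 ≤ g) : (1 : ZMod g) ≠ 0 := by
  intro h
  have : g ∣ 1 := aux_dvd_of_cast_zero g hg (by simpa using h)
  have := Nat.le_of_dvd one_pos this
  omega

lemma aux_two_ne (hg : 5 ≤ g) : (2 : ZMod g) ≠ 0 := by
  intro h
  have : g ∣ 2 := aux_dvd_of_cast_zero g hg (by simpa using h)
  have := Nat.le_of_dvd two_pos this
  omega

/-- The construction: vertices `ZMod g × ZMod g`; undirected edges within rows
(column ±1), arcs from `(a,b)` to `(a+1, b+k)` for `k < z`. -/
def myG (hg : 5 ≤ g) : MixedGraph (ZMod g × ZMod g) where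
  Edge u v := v.1 = u.1 ∧ (v.2 = u.2 + 1 ∨ u.2 = v.2 + 1)
  Arc u v := v.1 = u.1 + 1 ∧ ∃ k : ℕ, k < z ∧ v.2 = u.2 + (k : ZMod g)
  edge_symm := by
    rintro u v ⟨h1, h2⟩
    exact ⟨h1.symm, h2.symm⟩
  edge_irrefl := by
    rintro v ⟨-, h | h⟩ <;>
      exact aux_one_ne g hg (left_eq_add.mp h)
  arc_irrefl := by
    rintro v ⟨h, -⟩
    exact aux_one_ne g hg (left_eq_add.mp h)

lemma myG_edge_card (hg : 5 ≤ g) (v : ZMod g × ZMod g) :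
    Nat.card {u | (myG g z hg).Edge v u} = 2 := by
  have hset : {u | (myG g z hg).Edge v u}
      = ({(v.1, v.2 + 1), (v.1, v.2 - 1)} : Set (ZMod g × ZMod g)) := by
    ext u
    simp only [myG, Set.mem_setOf_eq, Set.mem_insert_iff, Set.mem_singleton_iff,
      Prod.ext_iff]
    constructor
    · rintro ⟨h1, h2 | h2⟩
      · exact Or.inl ⟨h1, h2⟩
      · exact Or.inr ⟨h1, by rw [h2]; ring⟩
    · rintro (⟨h1, h2⟩ | ⟨h1, h2⟩)
      · exact ⟨h1, Or.inl h2⟩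
      · exact ⟨h1, Or.inr (by rw [h2]; ring)⟩
  rw [hset, Nat.card_coe_set_eq, Set.ncard_pair]
  intro h
  have h2 : v.2 + 1 = v.2 - 1 := (Prod.ext_iff.mp h).2
  apply aux_two_ne g hg
  have : v.2 + 1 - (v.2 - 1) = 0 := by rw [h2]; ring
  calc (2 : ZMod g) = v.2 + 1 - (v.2 - 1) := by ring
    _ = 0 := this

lemma myG_arc_card (hg : 5 ≤ g) (hz : z ≤ g) (v : ZMod g × ZMod g) :
    Nat.card {u | (myG g z hg).Arc v u} = z := by
  classical
  have hset : {u | (myG g z hg).Arc v u}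
      = ((Finset.range z).image (fun k : ℕ => (v.1 + 1, v.2 + (k : ZMod g))) : Set _) := by
    ext u
    simp only [myG, Set.mem_setOf_eq, Finset.coe_image, Set.mem_image, Finset.mem_coe,
      Finset.mem_range, Prod.ext_iff]
    constructor
    · rintro ⟨h1, k, hk, h2⟩
      exact ⟨k, hk, h1.symm, h2.symm⟩
    · rintro ⟨k, hk, h1, h2⟩
      exact ⟨h1.symm, k, hk, h2.symm⟩
  rw [hset, Nat.card_coe_set_eq, Set.ncard_coe_finset,
    Finset.card_image_of_injOn, Finset.card_range]
  intro a ha b hb hab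
  simp only [Finset.mem_coe, Finset.mem_range] at ha hb
  have h2 : (a : ZMod g) = (b : ZMod g) :=
    add_left_cancel (Prod.ext_iff.mp hab).2
  have := congrArg ZMod.val h2
  rwa [ZMod.val_cast_of_lt (by omega), ZMod.val_cast_of_lt (by omega)] at this

end Aux

section Girth

/-- If a predicate on `ZMod n` propagates around the cycle, it is constant. -/
lemma zmod_all_of_iff {n : ℕ} [NeZero n] (P : ZMod n → Prop)
    (h : ∀ i, P i ↔ P (i + 1)) {i j : ZMod n} (hi : P i) : P j := by
  have hprop : ∀ (k : ℕ), P (i + (k : ZMod n)) := by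
    intro k
    induction k with
    | zero => simpa using hi
    | succ m ih =>
      have h2 := (h (i + (m : ZMod n))).mp ih
      have h3 : ((m + 1 : ℕ) : ZMod n) = (m : ZMod n) + 1 := by push_cast; ring
      rw [h3, ← add_assoc]
      exact h2
  have key : i + ((j - i).val : ZMod n) = j := by
    rw [ZMod.natCast_rightInverse (j - i)]
    ring
  have := hprop (j - i).val
  rwa [key] at this

variable (g z : ℕ)

lemma myG_arc_iff (hg : 5 ≤ g) (u v : ZMod g × ZMod g) :
    (myG g z hg).Arc u v ↔ (v.1 = u.1 + 1 ∧ ∃ k : ℕ, k < z ∧ v.2 = u.2 + (k : ZMod g)) :=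
  Iff.rfl

lemma myG_edge_iff (hg : 5 ≤ g) (u v : ZMod g × ZMod g) :
    (myG g z hg).Edge u v ↔ (v.1 = u.1 ∧ (v.2 = u.2 + 1 ∨ u.2 = v.2 + 1)) :=
  Iff.rfl

lemma myG_has_cycle (hg : 5 ≤ g) (hz1 : 1 ≤ z) :
    ∃ c : MixedCycle (myG g z hg), c.len = g := by
  refine ⟨⟨g, by omega, fun i => (i, 0), fun _ => true, ?_, ?_, ?_, ?_⟩, rfl⟩
  · intro i _
    rw [myG_arc_iff]
    exact ⟨rfl, 0, hz1, by simp⟩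
  · intro i h
    simp at h
  · intro i j _ _ h _
    exact (Prod.ext_iff.mp h).1
  · intro i j h
    simp at h

lemma myG_girth_lb (hg : 5 ≤ g) (c : MixedCycle (myG g z hg)) : g ≤ c.len := by
  classical
  set n := c.len with hn
  haveI : NeZero n := ⟨c.len_pos.ne'⟩
  have hn1 : n ≠ 1 := by
    intro h1
    have hone : (1 : ZMod n) = 0 := by
      rw [← Nat.cast_one, ← h1]
      exact ZMod.natCast_self n
    have hv : c.vert (0 + 1) = c.vert 0 := by rw [zero_add, hone]
    cases hb : c.useArc 0 with
    | true =>
      have h := c.step_arc 0 hb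
      rw [hv] at h
      exact (myG g z hg).arc_irrefl _ h
    | false =>
      have h := c.step_edge 0 hb
      rw [hv] at h
      exact (myG g z hg).edge_irrefl _ h
  -- telescoping sums vanish
  have htel : ∀ f : ZMod n → ZMod g, ∑ i : ZMod n, (f (i + 1) - f i) = 0 := by
    intro f
    rw [Finset.sum_sub_distrib,
      Fintype.sum_equiv (Equiv.addRight (1 : ZMod n)) (fun i => f (i + 1)) f (fun i => rfl)]
    exact sub_self _
  -- row steps
  have hrowstep : ∀ i : ZMod n,
      (c.vert (i + 1)).1 = (c.vert i).1 + (if c.useArc i = true then (1 : ZMod g) else 0) := by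
    intro i
    cases hb : c.useArc i with
    | true =>
      have h := ((myG_arc_iff g z hg _ _).mp (c.step_arc i hb)).1
      simpa using h
    | false =>
      have h := ((myG_edge_iff g z hg _ _).mp (c.step_edge i hb)).1
      simpa using h
  set A := (Finset.univ.filter (fun i : ZMod n => c.useArc i = true)).card with hA
  have hAsum : ((A : ℕ) : ZMod g) = 0 := by
    have h : ∑ i : ZMod n, ((c.vert (i + 1)).1 - (c.vert i).1) = 0 := htel (fun i => (c.vert i).1)
    have h2 : ∑ i : ZMod n, ((c.vert (i + 1)).1 - (c.vert i).1)
        = ∑ i : ZMod n, (if c.useArc i = true then (1 : ZMod g) else 0) :=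
      Finset.sum_congr rfl (fun i _ => by rw [hrowstep i]; ring)
    rw [h2, Finset.sum_boole] at h
    exact h
  by_cases hA0 : A = 0
  · -- all steps are edges
    have hedge : ∀ i : ZMod n, c.useArc i = false := by
      intro i
      by_contra hb
      have hbt : c.useArc i = true := by simpa using hb
      have hi : i ∈ Finset.univ.filter (fun i : ZMod n => c.useArc i = true) := by
        simp [hbt]
      rw [Finset.card_eq_zero.mp hA0] at hi
      exact absurd hi (Finset.notMem_empty i)
    have hstep : ∀ i : ZMod n,
        (c.vert (i + 1)).1 = (c.vert i).1 ∧
        ((c.vert (i + 1)).2 = (c.vert i).2 + 1 ∨ (c.vert i).2 = (c.vert (i + 1)).2 + 1) :=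
      fun i => (myG_edge_iff g z hg _ _).mp (c.step_edge i (hedge i))
    have hdown : ∀ i : ZMod n, ¬ ((c.vert (i + 1)).2 = (c.vert i).2 + 1) →
        (c.vert i).2 = (c.vert (i + 1)).2 + 1 := by
      intro i hnp
      rcases (hstep i).2 with h | h
      · exact absurd h hnp
      · exact h
    by_cases hall : ∀ i : ZMod n, (c.vert (i + 1)).2 = (c.vert i).2 + 1
    · -- all up: n ≡ 0 mod g
      have h : ∑ i : ZMod n, ((c.vert (i + 1)).2 - (c.vert i).2) = 0 := htel (fun i => (c.vert i).2)
      have h2 : ∑ i : ZMod n, ((c.vert (i + 1)).2 - (c.vert i).2)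
          = ∑ _i : ZMod n, (1 : ZMod g) :=
        Finset.sum_congr rfl (fun i _ => by rw [hall i]; ring)
      rw [h2, Finset.sum_const, Finset.card_univ, ZMod.card, nsmul_eq_mul, mul_one] at h
      exact Nat.le_of_dvd c.len_pos (aux_dvd_of_cast_zero g hg h)
    · by_cases hall' : ∀ i : ZMod n, ¬ ((c.vert (i + 1)).2 = (c.vert i).2 + 1)
      · -- all down: n ≡ 0 mod g
        have h : ∑ i : ZMod n, ((c.vert (i + 1)).2 - (c.vert i).2) = 0 := htel (fun i => (c.vert i).2)
        have h2 : ∑ i : ZMod n, ((c.vert (i + 1)).2 - (c.vert i).2)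
            = ∑ _i : ZMod n, (-1 : ZMod g) :=
          Finset.sum_congr rfl (fun i _ => by rw [hdown i (hall' i)]; ring)
        rw [h2, Finset.sum_const, Finset.card_univ, ZMod.card, nsmul_eq_mul,
          mul_neg_one, neg_eq_zero] at h
        exact Nat.le_of_dvd c.len_pos (aux_dvd_of_cast_zero g hg h)
      · -- there is a switch; derive a contradiction
        exfalso
        have hswitch : ∃ i : ZMod n,
            ¬ (((c.vert (i + 1)).2 = (c.vert i).2 + 1) ↔
               ((c.vert (i + 1 + 1)).2 = (c.vert (i + 1)).2 + 1)) := by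
          by_contra hno
          push_neg at hno
          push_neg at hall hall'
          obtain ⟨i0, hi0⟩ := hall
          obtain ⟨j0, hj0⟩ := hall'
          exact hi0 (zmod_all_of_iff
            (fun i => (c.vert (i + 1)).2 = (c.vert i).2 + 1)
            (fun i => hno i) hj0)
        obtain ⟨i, hi⟩ := hswitch
        have key : c.vert (i + 1 + 1) = c.vert i → False := by
          intro hvv
          have heq := c.edge_once i (i + 1) (hedge i) (hedge (i + 1))
            (Or.inr ⟨hvv.symm, rfl⟩)
          have h1 : (1 : ZMod n) = 0 := left_eq_add.mp heq
          rw [← Nat.cast_one] at h1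
          exact hn1 (Nat.dvd_one.mp ((ZMod.natCast_eq_zero_iff 1 n).mp h1))
        by_cases hPi : (c.vert (i + 1)).2 = (c.vert i).2 + 1
        · have hnPi1 : ¬ ((c.vert (i + 1 + 1)).2 = (c.vert (i + 1)).2 + 1) :=
            fun h => hi ⟨fun _ => h, fun _ => hPi⟩
          have hd := hdown (i + 1) hnPi1
          have hcol : (c.vert (i + 1 + 1)).2 = (c.vert i).2 :=
            add_right_cancel (hd.symm.trans hPi)
          have hrow : (c.vert (i + 1 + 1)).1 = (c.vert i).1 := by
            rw [(hstep (i + 1)).1, (hstep i).1]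
          exact key (Prod.ext_iff.mpr ⟨hrow, hcol⟩)
        · have hPi1 : (c.vert (i + 1 + 1)).2 = (c.vert (i + 1)).2 + 1 := by
            by_contra h
            exact hi ⟨fun hp => absurd hp hPi, fun hp => absurd hp h⟩
          have hd := hdown i hPi
          have hcol : (c.vert (i + 1 + 1)).2 = (c.vert i).2 := hPi1.trans hd.symm
          have hrow : (c.vert (i + 1 + 1)).1 = (c.vert i).1 := by
            rw [(hstep (i + 1)).1, (hstep i).1]
          exact key (Prod.ext_iff.mpr ⟨hrow, hcol⟩)
  · -- some arcs: g ∣ A, 0 < A ≤ n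
    have hdvd : g ∣ A := aux_dvd_of_cast_zero g hg hAsum
    have hge : g ≤ A := Nat.le_of_dvd (Nat.pos_of_ne_zero hA0) hdvd
    have hle : A ≤ n := by
      calc A ≤ Finset.univ.card := Finset.card_filter_le _ _
        _ = n := by rw [Finset.card_univ, ZMod.card]
    omega

end Girth

/-- For all `g ≥ 5` and `1 ≤ z ≤ g` there is a `(2,z,g)`-graph with `g^2` vertices. -/
theorem f_2_z_g_upper (g z : ℕ) (hg : 5 ≤ g) (hz1 : 1 ≤ z) (hzg : z ≤ g) :
    (∃ (V : Type) (_ : Fintype V) (G : MixedGraph V),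
      Nat.card V = g ^ 2 ∧ IsMixedRZG G 2 z g) := by
  haveI : NeZero g := ⟨by omega⟩
  refine ⟨ZMod g × ZMod g, inferInstance, myG g z hg, ?_, ?_, ?_, ?_, ?_⟩
  · rw [Nat.card_prod, Nat.card_zmod, sq]
  · exact myG_edge_card g z hg
  · exact myG_arc_card g z hg hzg
  · exact myG_has_cycle g z hg hz1
  · exact myG_girth_lb g z hg
end

section
/- For every even integer g ≥ 6 and every integer z with 1 ≤ z ≤ g/2, there exists a (2,z,g)-graph with exactly g² − g vertices. -/
namespace MixedCageAux

variable {g z : ℕ}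

lemma mg_one_ne_zero (hg : 3 ≤ g) : (1 : ZMod g) ≠ 0 := by
  haveI : NeZero g := ⟨by omega⟩
  intro h
  rw [show (1 : ZMod g) = ((1 : ℕ) : ZMod g) by norm_cast,
    ZMod.natCast_eq_zero_iff] at h
  have := Nat.le_of_dvd one_pos h
  omega

lemma mg_two_ne_zero (hg : 3 ≤ g) : (2 : ZMod g) ≠ 0 := by
  haveI : NeZero g := ⟨by omega⟩
  intro h
  rw [show (2 : ZMod g) = ((2 : ℕ) : ZMod g) by norm_cast,
    ZMod.natCast_eq_zero_iff] at h
  have := Nat.le_of_dvd two_pos h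
  omega

def mgG (g z : ℕ) (hg : 6 ≤ g) : MixedGraph (ZMod (g - 1) × ZMod g) where
  Edge u v := u.1 = v.1 ∧ (v.2 = u.2 + 1 ∨ u.2 = v.2 + 1)
  Arc u v := v.1 = u.1 + 1 ∧ ∃ k, k < z ∧ v.2 = u.2 + ((2 * k + 1 : ℕ) : ZMod g)
  edge_symm h := ⟨h.1.symm, h.2.symm⟩
  edge_irrefl v h := by
    rcases h.2 with h2 | h2 <;>
      exact mg_one_ne_zero (by omega) (left_eq_add.mp h2)
  arc_irrefl v h := mg_one_ne_zero (g := g - 1) (by omega) (left_eq_add.mp h.1)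

lemma sum_shift {n : ℕ} [NeZero n] {M : Type*} [AddCommGroup M] (f : ZMod n → M) :
    ∑ i : ZMod n, (f (i + 1) - f i) = 0 := by
  rw [Finset.sum_sub_distrib, sub_eq_zero]
  exact Fintype.sum_equiv (Equiv.addRight 1) _ _ (fun i => rfl)

lemma edge_deg (hg : 6 ≤ g) (v : ZMod (g - 1) × ZMod g) :
    Nat.card {u | (mgG g z hg).Edge v u} = 2 := by
  haveI : NeZero g := ⟨by omega⟩
  have hset : {u | (mgG g z hg).Edge v u} =
      ({(v.1, v.2 + 1), (v.1, v.2 - 1)} : Set (ZMod (g - 1) × ZMod g)) := by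
    ext u
    simp only [mgG, Set.mem_setOf_eq, Set.mem_insert_iff, Set.mem_singleton_iff,
      Prod.ext_iff]
    constructor
    · rintro ⟨h1, h2 | h2⟩
      · exact Or.inl ⟨h1.symm, h2⟩
      · exact Or.inr ⟨h1.symm, by rw [eq_sub_iff_add_eq]; exact h2.symm⟩
    · rintro (⟨h1, h2⟩ | ⟨h1, h2⟩)
      · exact ⟨h1.symm, Or.inl h2⟩
      · exact ⟨h1.symm, Or.inr (by rw [h2]; rw [sub_add_cancel])⟩
  rw [hset, Nat.card_coe_set_eq, Set.ncard_pair]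
  intro h
  have h2 : v.2 + 1 = v.2 - 1 := congrArg Prod.snd h
  have : (2 : ZMod g) = 0 := by linear_combination h2
  exact mg_two_ne_zero (by omega) this

lemma arc_deg (hg : 6 ≤ g) (hge : Even g) (hz : z ≤ g / 2) (v : ZMod (g - 1) × ZMod g) :
    Nat.card {u | (mgG g z hg).Arc v u} = z := by
  haveI : NeZero g := ⟨by omega⟩
  classical
  have hlt : ∀ k, k < z → 2 * k + 1 < g := by
    intro k hk; omega
  have hset : {u | (mgG g z hg).Arc v u} =
      ↑((Finset.range z).image
        (fun k => ((v.1 + 1, v.2 + ((2 * k + 1 : ℕ) : ZMod g)) : ZMod (g - 1) × ZMod g))) := by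
    ext u
    simp only [mgG, Set.mem_setOf_eq, Finset.coe_image, Set.mem_image, Finset.mem_coe,
      Finset.mem_range, Prod.ext_iff]
    constructor
    · rintro ⟨h1, k, hk, h2⟩
      exact ⟨k, hk, h1.symm, h2.symm⟩
    · rintro ⟨k, hk, h1, h2⟩
      exact ⟨h1.symm, k, hk, h2.symm⟩
  rw [hset, Nat.card_coe_set_eq, Set.ncard_coe_finset,
    Finset.card_image_of_injOn, Finset.card_range]
  intro k hk k' hk' h
  simp only [Finset.mem_coe, Finset.mem_range] at hk hk'
  have h2 : ((2 * k + 1 : ℕ) : ZMod g) = ((2 * k' + 1 : ℕ) : ZMod g) := by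
    have := (Prod.ext_iff.mp h).2
    exact add_left_cancel this
  have := congrArg ZMod.val h2
  rw [ZMod.val_natCast_of_lt (hlt k hk), ZMod.val_natCast_of_lt (hlt k' hk')] at this
  omega

lemma girth_lb (hg : 6 ≤ g) (hge : Even g) (hz : z ≤ g / 2)
    (c : MixedCycle (mgG g z hg)) : g ≤ c.len := by
  classical
  haveI : NeZero g := ⟨by omega⟩
  haveI : NeZero (g - 1) := ⟨by omega⟩
  haveI : NeZero c.len := ⟨c.len_pos.ne'⟩
  by_contra hlen
  push_neg at hlen
  -- layer telescoping: number of arcs is divisible by g - 1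
  have h1 : ∑ i : ZMod c.len, ((c.vert (i + 1)).1 - (c.vert i).1) = 0 := sum_shift (fun i => (c.vert i).1)
  have h2 : ∀ i : ZMod c.len, (c.vert (i + 1)).1 - (c.vert i).1
      = if c.useArc i = true then 1 else 0 := by
    intro i
    cases hA : c.useArc i
    · obtain ⟨he, -⟩ := c.step_edge i hA
      rw [if_neg (by simp), sub_eq_zero]
      exact he.symm
    · obtain ⟨ha, -⟩ := c.step_arc i hA
      rw [if_pos rfl, ha, add_sub_cancel_left]
  rw [Finset.sum_congr rfl (fun i _ => h2 i), Finset.sum_boole] at h1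
  set A := (Finset.univ.filter (fun i => c.useArc i = true)).card with hA_def
  have hdvd : (g - 1) ∣ A := by rwa [ZMod.natCast_eq_zero_iff] at h1
  have hAle : A ≤ c.len := le_trans (Finset.card_filter_le _ _)
    (by rw [Finset.card_univ, ZMod.card])
  rcases Nat.eq_zero_or_pos A with hA0 | hApos
  case inr =>
    -- at least one arc: all steps are arcs and len = g - 1, parity contradiction
    have hAeq : A = c.len ∧ c.len = g - 1 := by
      have := Nat.le_of_dvd hApos hdvd
      omega
    have hall : ∀ i, c.useArc i = true := by
      intro i
      have h2 : Finset.univ.filter (fun i => c.useArc i = true) = Finset.univ :=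
        Finset.eq_univ_of_card _ (by simp [← hA_def, hAeq.1, ZMod.card])
      have h3 : i ∈ Finset.filter (fun i => c.useArc i = true) Finset.univ := by
        rw [h2]; exact Finset.mem_univ i
      exact (Finset.mem_filter.mp h3).2
    have h2dvd : (2 : ℕ) ∣ g := hge.two_dvd
    set φ : ZMod g →+* ZMod 2 := ZMod.castHom h2dvd (ZMod 2) with hφ
    have h3 : ∑ i : ZMod c.len, φ ((c.vert (i + 1)).2 - (c.vert i).2) = 0 := by
      rw [← map_sum, sum_shift (fun i => (c.vert i).2), map_zero]
    have h4 : ∀ i : ZMod c.len, φ ((c.vert (i + 1)).2 - (c.vert i).2) = 1 := by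
      intro i
      obtain ⟨-, k, -, hk⟩ := c.step_arc i (hall i)
      rw [hk, add_sub_cancel_left, map_natCast]
      calc ((2 * k + 1 : ℕ) : ZMod 2) = ((2 : ℕ) : ZMod 2) * k + 1 := by push_cast; ring
      _ = 1 := by rw [ZMod.natCast_self, zero_mul, zero_add]
    rw [Finset.sum_congr rfl (fun i _ => h4 i), Finset.sum_const, Finset.card_univ,
      ZMod.card, nsmul_eq_mul, mul_one] at h3
    have : (2 : ℕ) ∣ c.len := by rwa [ZMod.natCast_eq_zero_iff] at h3
    omega
  case inl =>
    -- pure edge cycle: must go around a whole layer, so len ≥ g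
    have hall0 : ∀ i, c.useArc i = false := by
      intro i
      have h2 := Finset.filter_eq_empty_iff.mp (Finset.card_eq_zero.mp hA0) (Finset.mem_univ i)
      simpa using h2
    have hstep : ∀ i, (c.vert i).1 = (c.vert (i + 1)).1 ∧
        ((c.vert (i + 1)).2 = (c.vert i).2 + 1 ∨ (c.vert i).2 = (c.vert (i + 1)).2 + 1) :=
      fun i => c.step_edge i (hall0 i)
    set lay : ZMod c.len → ZMod (g - 1) := fun i => (c.vert i).1 with hlay
    set low : ZMod c.len → ZMod g := fun i =>
      if (c.vert (i + 1)).2 = (c.vert i).2 + 1 then (c.vert i).2 else (c.vert i).2 - 1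
      with hlow
    set m : ZMod c.len → ZMod (g - 1) × ZMod g := fun i => (lay i, low i) with hm
    have fact_lo : ∀ i,
        (c.vert i = (lay i, low i) ∧ c.vert (i + 1) = (lay i, low i + 1)) ∨
        (c.vert i = (lay i, low i + 1) ∧ c.vert (i + 1) = (lay i, low i)) := by
      intro i
      by_cases hc : (c.vert (i + 1)).2 = (c.vert i).2 + 1
      · left
        constructor
        · exact Prod.ext_iff.mpr ⟨rfl, by rw [hlow]; simp [hc]⟩
        · refine Prod.ext_iff.mpr ⟨(hstep i).1.symm, ?_⟩
          rw [hlow]; simp [hc]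
      · right
        have hcc : (c.vert i).2 = (c.vert (i + 1)).2 + 1 := (hstep i).2.resolve_left hc
        constructor
        · refine Prod.ext_iff.mpr ⟨rfl, ?_⟩
          rw [hlow]; simp only [if_neg hc]
          rw [sub_add_cancel]
        · refine Prod.ext_iff.mpr ⟨(hstep i).1.symm, ?_⟩
          rw [hlow]; simp only [if_neg hc]
          rw [eq_sub_iff_add_eq]
          exact hcc.symm
    have hm_inj : ∀ i j, m i = m j → i = j := by
      intro i j hij
      have hij1 : lay i = lay j := (Prod.ext_iff.mp hij).1
      have hij2 : low i = low j := (Prod.ext_iff.mp hij).2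
      rcases fact_lo i with ⟨hi1, hi2⟩ | ⟨hi1, hi2⟩ <;>
        rcases fact_lo j with ⟨hj1, hj2⟩ | ⟨hj1, hj2⟩
      · exact c.edge_once i j (hall0 i) (hall0 j)
          (Or.inl ⟨by rw [hi1, hij1, hij2, ← hj1], by rw [hi2, hij1, hij2, ← hj2]⟩)
      · exact c.edge_once i j (hall0 i) (hall0 j)
          (Or.inr ⟨by rw [hi1, hij1, hij2, ← hj2], by rw [hi2, hij1, hij2, ← hj1]⟩)
      · exact c.edge_once i j (hall0 i) (hall0 j)
          (Or.inr ⟨by rw [hi1, hij1, hij2, ← hj2], by rw [hi2, hij1, hij2, ← hj1]⟩)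
      · exact c.edge_once i j (hall0 i) (hall0 j)
          (Or.inl ⟨by rw [hi1, hij1, hij2, ← hj1], by rw [hi2, hij1, hij2, ← hj2]⟩)
    set F : ZMod (g - 1) × ZMod g → ℕ :=
      fun w => (Finset.univ.filter (fun i => m i = w)).card with hF
    have hF1 : ∀ w, F w ≤ 1 := by
      intro w
      apply Finset.card_le_one.mpr
      intro i hi j hj
      exact hm_inj i j (((Finset.mem_filter.mp hi).2).trans ((Finset.mem_filter.mp hj).2).symm)
    have hone : (1 : ZMod g) ≠ 0 := mg_one_ne_zero (by omega)
    have hvne : ∀ i, c.vert i ≠ c.vert (i + 1) := by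
      intro i h
      rcases (hstep i).2 with h2 | h2
      · rw [← h] at h2; exact hone (left_eq_add.mp h2)
      · rw [← h] at h2; exact hone (left_eq_add.mp h2)
    have key : ∀ (α : ZMod (g - 1)) (x : ZMod g), F (α, x) + F (α, x + 1) =
        2 * (Finset.univ.filter (fun i => c.vert i = (α, x + 1))).card := by
      intro α x
      have hdisj : Disjoint (Finset.univ.filter (fun i => m i = (α, x)))
          (Finset.univ.filter (fun i => m i = (α, x + 1))) := by
        rw [Finset.disjoint_left]
        intro i hi hi'
        have := ((Finset.mem_filter.mp hi).2.symm.trans (Finset.mem_filter.mp hi').2)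
        have := (Prod.ext_iff.mp this).2
        exact hone (left_eq_add.mp this)
      have hL : F (α, x) + F (α, x + 1) =
          (Finset.univ.filter (fun i => m i = (α, x) ∨ m i = (α, x + 1))).card := by
        rw [Finset.filter_or, Finset.card_union_of_disjoint hdisj]
      have hdisj2 : Disjoint (Finset.univ.filter (fun i => c.vert i = (α, x + 1)))
          (Finset.univ.filter (fun i => c.vert (i + 1) = (α, x + 1))) := by
        rw [Finset.disjoint_left]
        intro i hi hi'
        exact hvne i (((Finset.mem_filter.mp hi).2).trans ((Finset.mem_filter.mp hi').2).symm)
      have hshift : (Finset.univ.filter (fun i => c.vert (i + 1) = (α, x + 1))).card =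
          (Finset.univ.filter (fun i => c.vert i = (α, x + 1))).card :=
        Finset.card_equiv (Equiv.addRight 1) (by simp)
      have hsets : Finset.univ.filter (fun i => m i = (α, x) ∨ m i = (α, x + 1)) =
          Finset.univ.filter (fun i => c.vert i = (α, x + 1) ∨ c.vert (i + 1) = (α, x + 1)) := by
        apply Finset.filter_congr
        intro i _
        simp only [hm, Prod.mk.injEq]
        constructor
        · rintro (⟨hα, hx⟩ | ⟨hα, hx⟩)
          · rcases fact_lo i with ⟨h1, h2⟩ | ⟨h1, h2⟩
            · exact Or.inr (by rw [h2, hα, hx])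
            · exact Or.inl (by rw [h1, hα, hx])
          · rcases fact_lo i with ⟨h1, h2⟩ | ⟨h1, h2⟩
            · exact Or.inl (by rw [h1, hα, hx])
            · exact Or.inr (by rw [h2, hα, hx])
        · rintro (hv | hv)
          · rcases fact_lo i with ⟨h1, h2⟩ | ⟨h1, h2⟩
            · have := Prod.ext_iff.mp (h1.symm.trans hv)
              exact Or.inr ⟨this.1, this.2⟩
            · have := Prod.ext_iff.mp (h1.symm.trans hv)
              exact Or.inl ⟨this.1, add_right_cancel this.2⟩
          · rcases fact_lo i with ⟨h1, h2⟩ | ⟨h1, h2⟩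
            · have := Prod.ext_iff.mp (h2.symm.trans hv)
              exact Or.inl ⟨this.1, add_right_cancel this.2⟩
            · have := Prod.ext_iff.mp (h2.symm.trans hv)
              exact Or.inr ⟨this.1, this.2⟩
      rw [hL, hsets, Finset.filter_or, Finset.card_union_of_disjoint hdisj2, hshift]
      ring
    have hsucc : ∀ (α : ZMod (g - 1)) (x : ZMod g), F (α, x) = F (α, x + 1) := by
      intro α x
      have hk := key α x
      have ha := hF1 (α, x)
      have hb := hF1 (α, x + 1)
      omega
    have hnat : ∀ (α : ZMod (g - 1)) (y : ZMod g) (k : ℕ), F (α, y + (k : ZMod g)) = F (α, y) := by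
      intro α y k
      induction k with
      | zero => simp
      | succ k ih =>
        have hcast : ((k + 1 : ℕ) : ZMod g) = ((k : ℕ) : ZMod g) + 1 := by push_cast; ring
        rw [hcast, ← add_assoc, ← hsucc, ih]
    have hF0 : 1 ≤ F (m 0) := by
      rw [hF]
      refine Finset.card_pos.mpr ⟨0, ?_⟩
      simp
    have hpos : ∀ x : ZMod g, 1 ≤ F ((m 0).1, x) := by
      intro x
      have hx : (m 0).2 + (((x - (m 0).2).val : ℕ) : ZMod g) = x := by
        rw [ZMod.natCast_zmod_val, add_sub_cancel]
      have := hnat (m 0).1 (m 0).2 (x - (m 0).2).val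
      rw [hx] at this
      rw [this]
      exact hF0
    have hex : ∀ x : ZMod g, ∃ i, m i = ((m 0).1, x) := by
      intro x
      obtain ⟨i, hi⟩ := Finset.card_pos.mp (lt_of_lt_of_le one_pos (hpos x))
      exact ⟨i, (Finset.mem_filter.mp hi).2⟩
    choose f hf using hex
    have hfi : Function.Injective f := by
      intro x y hxy
      have h2 : (((m 0).1, x) : ZMod (g - 1) × ZMod g) = ((m 0).1, y) := by
        rw [← hf x, hxy, hf y]
      exact (Prod.ext_iff.mp h2).2
    have hcard := Fintype.card_le_of_injective f hfi
    rw [ZMod.card, ZMod.card] at hcard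
    omega

lemma girth_ub (hg : 6 ≤ g) : ∃ c : MixedCycle (mgG g z hg), c.len = g := by
  haveI : NeZero g := ⟨by omega⟩
  refine ⟨⟨g, by omega, fun i => ((0 : ZMod (g - 1)), i), fun _ => false,
    ?_, ?_, ?_, ?_⟩, rfl⟩
  · intro i h; simp at h
  · intro i _
    exact ⟨rfl, Or.inl rfl⟩
  · intro i j h; simp at h
  · intro i j _ _ h
    rcases h with ⟨h1, -⟩ | ⟨h1, h2⟩
    · exact (Prod.ext_iff.mp h1).2
    · exfalso
      have e1 : i = j + 1 := (Prod.ext_iff.mp h1).2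
      have e2 : i + 1 = j := (Prod.ext_iff.mp h2).2
      exact mg_two_ne_zero (g := g) (by omega) (by linear_combination e2 - e1)

end MixedCageAux

open MixedCageAux in
/-- For every even `g ≥ 6` and `1 ≤ z ≤ g/2`, there is a `(2,z,g)`-graph with
`g^2 - g` vertices. -/
theorem f_2_z_g_even (g z : ℕ) (hg : 6 ≤ g) (hge : Even g) (hz1 : 1 ≤ z) (hzg : z ≤ g / 2) :
    (∃ (V : Type) (_ : Fintype V) (G : MixedGraph V),
      Nat.card V = g ^ 2 - g ∧ IsMixedRZG G 2 z g) := by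
  haveI : NeZero g := ⟨by omega⟩
  haveI : NeZero (g - 1) := ⟨by omega⟩
  refine ⟨ZMod (g - 1) × ZMod g, inferInstance, mgG g z hg, ?_, ?_, ?_, ?_⟩
  · rw [Nat.card_prod, Nat.card_zmod, Nat.card_zmod, pow_two, Nat.sub_mul, one_mul]
  · exact fun v => edge_deg hg v
  · exact fun v => arc_deg hg hge hzg v
  · exact ⟨girth_ub hg, fun c => girth_lb hg hge hzg c⟩
end

section
/- For every odd integer g ≥ 5 and every integer z with 1 ≤ z ≤ (g+1)/2, there exists a (2,z,g)-graph with exactly g² − 1 vertices. -/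
/-!
Take `g - 1` layers, each an undirected cycle of length `g + 1` on `ZMod (g + 1)`, and let the
arcs leaving a vertex of layer `j` go to layer `j + 1`, shifted by `2t` for `t < z`, and by one
more when `j = 0`. The arc from `(0, 0)` to `(1, 1)`, the arcs from `(1, j)` to
`(1, j + 1)` and the edge from `(1, 0)` back to `(0, 0)` form a cycle of length `g`.
A shorter cycle climbs a multiple of `g - 1` layers in total, so it uses either no arc or only
arcs. In the first case it winds around a single layer, which has length `g + 1`. In the second
it passes through every layer exactly once, so its total shift is odd, which is impossible
since `g + 1` is even.
-/

open Finset

namespace ZMod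

theorem apply_eq_apply_zero_of_apply_add_one {n : ℕ} [NeZero n] {α : Sort*}
    {f : ZMod n → α} (hf : ∀ i, f (i + 1) = f i) (i : ZMod n) : f i = f 0 := by
  have key : ∀ m : ℕ, f m = f 0 := by
    intro m
    induction m with
    | zero => simp
    | succ m ih => rw [Nat.cast_succ, hf, ih]
  simpa using key i.val

theorem sum_apply_add_one_sub {n : ℕ} [NeZero n] {M : Type*} [AddCommGroup M]
    (f : ZMod n → M) : ∑ i, (f (i + 1) - f i) = 0 := by
  rw [sum_sub_distrib, sub_eq_zero]
  exact Equiv.sum_comp (Equiv.addRight 1) f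

theorem bijective_of_apply_add_one {n m : ℕ} [NeZero n] (h : n = m) {f : ZMod n → ZMod m}
    (hf : ∀ i, f (i + 1) = f i + 1) : Function.Bijective f := by
  subst h
  have hshift : ∀ i, f i - i = f 0 - 0 :=
    apply_eq_apply_zero_of_apply_add_one (f := fun i => f i - i) fun i => by
      rw [hf]; ring
  convert (Equiv.addLeft (f 0)).bijective using 1
  funext i
  simp only [Equiv.coe_addLeft]
  linear_combination hshift i

end ZMod

namespace MixedCycle

variable {V : Type*} {G : MixedGraph V} (c : MixedCycle G)

instance : NeZero c.len := ⟨c.len_pos.ne'⟩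

theorem sum_sub_eq_zero {M : Type*} [AddCommGroup M] (f : V → M) :
    ∑ i, (f (c.vert (i + 1)) - f (c.vert i)) = 0 :=
  ZMod.sum_apply_add_one_sub (f ∘ c.vert)

theorem vert_add_one_add_one_ne {i : ZMod c.len} (hi : c.useArc i = false)
    (hi' : c.useArc (i + 1) = false) : c.vert (i + 1 + 1) ≠ c.vert i := by
  intro h
  have hii : i = i + 1 := c.edge_once i (i + 1) hi hi' (Or.inr ⟨h.symm, rfl⟩)
  have hloop := c.step_edge i hi
  rw [← hii] at hloop
  exact G.edge_irrefl _ hloop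

def ofInjective (n : ℕ) (hn : 3 ≤ n) (vert : ZMod n → V) (hvert : vert.Injective)
    (useArc : ZMod n → Bool) (step_arc : ∀ i, useArc i = true → G.Arc (vert i) (vert (i + 1)))
    (step_edge : ∀ i, useArc i = false → G.Edge (vert i) (vert (i + 1))) : MixedCycle G where
  len := n
  len_pos := by omega
  vert := vert
  useArc := useArc
  step_arc := step_arc
  step_edge := step_edge
  arc_once _ _ _ _ h _ := hvert h
  edge_once i j _ _ := by
    rintro (⟨h, -⟩ | ⟨h, h'⟩)
    · exact hvert h
    · have htwo : ((2 : ℕ) : ZMod n) = 0 := by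
        push_cast
        linear_combination hvert h' - hvert h
      have := Nat.le_of_dvd two_pos ((ZMod.natCast_eq_zero_iff 2 n).mp htwo)
      omega

end MixedCycle

section LayerGraph

variable (q p z : ℕ) [Fact (1 < q)] [Fact (1 < p)]

def layerGraph : MixedGraph (ZMod q × ZMod p) where
  Edge u v := v.2 = u.2 ∧ (v.1 = u.1 + 1 ∨ u.1 = v.1 + 1)
  Arc u v := v.2 = u.2 + 1 ∧ ∃ t < z, v.1 = u.1 + 2 * t + if u.2 = 0 then 1 else 0
  edge_symm := by
    rintro u v ⟨h₂, h₁ | h₁⟩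
    exacts [⟨h₂.symm, Or.inr h₁⟩, ⟨h₂.symm, Or.inl h₁⟩]
  edge_irrefl := by
    rintro v ⟨-, h | h⟩ <;> simp at h
  arc_irrefl := by
    rintro v ⟨h, -⟩
    simp at h

variable {q p z}

theorem layerGraph_card_edge (hq : 2 < q) (v : ZMod q × ZMod p) :
    Nat.card {u | (layerGraph q p z).Edge v u} = 2 := by
  have hset : {u | (layerGraph q p z).Edge v u} = {(v.1 + 1, v.2), (v.1 - 1, v.2)} := by
    ext ⟨x, j⟩
    simp only [layerGraph, Set.mem_ofPred_eq, Set.mem_insert_iff, Set.mem_singleton_iff,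
      Prod.mk.injEq, eq_sub_iff_add_eq]
    tauto
  rw [Nat.card_coe_set_eq, hset, Set.ncard_pair]
  intro h
  have htwo : ((2 : ℕ) : ZMod q) = 0 := by
    push_cast
    linear_combination congrArg Prod.fst h
  have := Nat.le_of_dvd two_pos ((ZMod.natCast_eq_zero_iff 2 q).mp htwo)
  omega

theorem layerGraph_card_arc (hz : 2 * z ≤ q + 1) (v : ZMod q × ZMod p) :
    Nat.card {u | (layerGraph q p z).Arc v u} = z := by
  classical
  let head (t : ℕ) : ZMod q × ZMod p := (v.1 + 2 * t + if v.2 = 0 then 1 else 0, v.2 + 1)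
  have hset : {u | (layerGraph q p z).Arc v u} = (range z).image head := by
    ext ⟨x, j⟩
    simp only [layerGraph, head, Set.mem_ofPred_eq, coe_image, coe_range, Set.mem_image,
      Set.mem_Iio, Prod.mk.injEq]
    constructor
    · rintro ⟨hj, t, ht, hx⟩
      exact ⟨t, ht, hx.symm, hj.symm⟩
    · rintro ⟨t, ht, hx, hj⟩
      exact ⟨hj.symm, t, ht, hx.symm⟩
  rw [Nat.card_coe_set_eq, hset, Set.ncard_coe_finset, card_image_of_injOn, card_range]
  intro t ht t' ht' h
  simp only [coe_range, Set.mem_Iio] at ht ht'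
  have hcast : ((2 * t : ℕ) : ZMod q) = ((2 * t' : ℕ) : ZMod q) := by
    push_cast
    simpa [head] using congrArg Prod.fst h
  have := congrArg ZMod.val hcast
  rw [ZMod.val_cast_of_lt (by omega), ZMod.val_cast_of_lt (by omega)] at this
  omega

end LayerGraph

section LayerGraphGirth

variable {q p z : ℕ} [Fact (1 < q)] [Fact (1 < p)]

theorem layerGraph_dvd_card_arcs (c : MixedCycle (layerGraph q p z)) :
    p ∣ #{i | c.useArc i} := by
  have hstep : ∀ i, (c.vert (i + 1)).2 - (c.vert i).2 = if c.useArc i then 1 else 0 := by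
    intro i
    cases h : c.useArc i
    · simp [(c.step_edge i h).1]
    · simp [(c.step_arc i h).1]
  rw [← ZMod.natCast_eq_zero_iff, natCast_card_filter]
  simpa only [hstep] using c.sum_sub_eq_zero Prod.snd

theorem layerGraph_le_len_of_forall_edge (c : MixedCycle (layerGraph q p z))
    (hc : ∀ i, c.useArc i = false) : q ≤ c.len := by
  set D : ZMod c.len → ZMod q := fun i => (c.vert (i + 1)).1 - (c.vert i).1 with hD
  have hunit : ∀ i, D i = 1 ∨ D i = -1 := by
    intro i
    rcases (c.step_edge i (hc i)).2 with h | h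
    · left; simp [hD, h]
    · right; simp [hD, h]
  have hback : ∀ i, D (i + 1) ≠ -D i := by
    intro i h
    refine c.vert_add_one_add_one_ne (hc i) (hc (i + 1)) (Prod.ext ?_ ?_)
    · linear_combination h
    · rw [(c.step_edge _ (hc _)).1, (c.step_edge _ (hc _)).1]
  have hconst : ∀ i, D (i + 1) = D i := by
    intro i
    have := hback i
    rcases hunit i with h | h <;> rcases hunit (i + 1) with h' | h' <;>
      simp only [h, h', neg_neg, ne_eq, not_true_eq_false] at this ⊢
  have hsum : (c.len : ZMod q) * D 0 = 0 := by
    have := c.sum_sub_eq_zero Prod.fst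
    simp only [← hD, ZMod.apply_eq_apply_zero_of_apply_add_one hconst] at this
    simpa using this
  have hlen : (c.len : ZMod q) = 0 := by
    rcases hunit 0 with h | h <;> simpa [h] using hsum
  exact Nat.le_of_dvd c.len_pos ((ZMod.natCast_eq_zero_iff _ _).mp hlen)

theorem layerGraph_len_ne_of_forall_arc (hq : 2 ∣ q) (c : MixedCycle (layerGraph q p z))
    (hc : ∀ i, c.useArc i = true) : c.len ≠ p := by
  intro hlen
  have hlayer : Function.Bijective fun i => (c.vert i).2 :=
    ZMod.bijective_of_apply_add_one hlen fun i => (c.step_arc i (hc i)).1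
  let φ := ZMod.castHom hq (ZMod 2)
  have hparity : ∀ i, φ (c.vert (i + 1)).1 - φ (c.vert i).1 =
      if (c.vert i).2 = 0 then 1 else 0 := by
    intro i
    obtain ⟨-, t, -, ht⟩ := c.step_arc i (hc i)
    have htwo : (2 : ZMod 2) = 0 := rfl
    rw [ht]
    split_ifs <;>
      simp only [map_add, map_mul, map_ofNat, htwo, zero_mul, add_zero, map_one,
        add_sub_cancel_left, sub_self]
  have h := c.sum_sub_eq_zero fun v => φ v.1
  simp only [hparity] at h
  rw [hlayer.sum_comp fun j => if j = 0 then (1 : ZMod 2) else 0] at h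
  simp at h

theorem layerGraph_lt_len (hpq : p < q) (hq : 2 ∣ q) (c : MixedCycle (layerGraph q p z)) :
    p < c.len := by
  by_contra! hle
  have hdvd := layerGraph_dvd_card_arcs c
  have hcard : #{i | c.useArc i} ≤ c.len := by
    simpa using card_filter_le (univ : Finset (ZMod c.len)) _
  rcases Nat.eq_zero_or_pos #{i | c.useArc i} with h0 | hpos
  · have := layerGraph_le_len_of_forall_edge c (by simpa [card_filter_eq_zero_iff] using h0)
    omega
  · have := Nat.le_of_dvd hpos hdvd
    have hall : ∀ i, c.useArc i = true := by
      simpa using (card_filter_eq_iff (s := univ)).mp (by rw [card_univ, ZMod.card]; omega)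
    exact layerGraph_len_ne_of_forall_arc hq c hall (by omega)

end LayerGraphGirth

section LayerGraphCycle

variable {q p z : ℕ} [Fact (1 < q)] [Fact (1 < p)]

variable (q p) in
def layerGraphCycleVert (i : ZMod (p + 1)) : ZMod q × ZMod p :=
  (if i = 0 then 0 else 1, (i.val : ZMod p))

omit [Fact (1 < p)] in
theorem layerGraphCycleVert_injective : (layerGraphCycleVert q p).Injective := by
  intro i j h
  simp only [layerGraphCycleVert, Prod.mk.injEq] at h
  obtain ⟨h₁, h₂⟩ := h
  by_cases hi : i = 0 <;> by_cases hj : j = 0 <;> simp only [hi, hj, if_true, if_false] at h₁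
  · exact hi.trans hj.symm
  · exact absurd h₁ zero_ne_one
  · exact absurd h₁ one_ne_zero
  · have := (ZMod.val_ne_zero i).mpr hi
    have := (ZMod.val_ne_zero j).mpr hj
    have := ZMod.val_lt i
    have := ZMod.val_lt j
    refine ZMod.val_injective _ (((ZMod.natCast_eq_natCast_iff _ _ _).mp h₂).eq_of_abs_lt ?_)
    exact abs_sub_lt_iff.mpr ⟨by omega, by omega⟩

theorem layerGraph_arc_cycleVert (hz : 0 < z) {i : ZMod (p + 1)} (hi : i.val ≠ p) :
    (layerGraph q p z).Arc (layerGraphCycleVert q p i) (layerGraphCycleVert q p (i + 1)) := by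
  have hp : 1 < p := Fact.out
  have : Fact (1 < p + 1) := ⟨by omega⟩
  have hsucc : (i + 1).val = i.val + 1 := by
    have := ZMod.val_lt i
    rw [ZMod.val_add_of_lt (by rw [ZMod.val_one]; omega), ZMod.val_one]
  have hsucc₀ : i + 1 ≠ 0 := by
    rw [← ZMod.val_ne_zero, hsucc]
    omega
  refine ⟨by simp [layerGraphCycleVert, hsucc], 0, hz, ?_⟩
  simp only [layerGraphCycleVert, if_neg hsucc₀, Nat.cast_zero, mul_zero, add_zero]
  by_cases hi₀ : i = 0
  · simp [hi₀]
  · have hcast : (i.val : ZMod p) ≠ 0 := by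
      rw [ne_eq, ZMod.natCast_eq_zero_iff]
      have := (ZMod.val_ne_zero i).mpr hi₀
      have := ZMod.val_lt i
      exact fun hdvd => absurd (Nat.le_of_dvd (by omega) hdvd) (by omega)
    simp only [if_neg hi₀, hcast, ↓reduceIte, add_zero]

theorem layerGraph_edge_cycleVert {i : ZMod (p + 1)} (hi : i.val = p) :
    (layerGraph q p z).Edge (layerGraphCycleVert q p i) (layerGraphCycleVert q p (i + 1)) := by
  have hp : 1 < p := Fact.out
  have hlast : i + 1 = 0 := by
    rw [← ZMod.natCast_zmod_val i, hi]
    exact_mod_cast ZMod.natCast_self (p + 1)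
  have hi₀ : i ≠ 0 := by
    rw [← ZMod.val_ne_zero, hi]
    omega
  simp [layerGraph, layerGraphCycleVert, hlast, hi₀, hi]

variable (q p z) in
def layerGraphCycle (hz : 0 < z) : MixedCycle (layerGraph q p z) :=
  MixedCycle.ofInjective (p + 1) (by have : 1 < p := Fact.out; omega) (layerGraphCycleVert q p)
    layerGraphCycleVert_injective (fun i => i.val ≠ p)
    (fun _ hi => layerGraph_arc_cycleVert hz (of_decide_eq_true hi))
    (fun _ hi => layerGraph_edge_cycleVert (not_not.mp (of_decide_eq_false hi)))

theorem layerGraph_isMixedRZG (hpq : p < q) (hq : 2 ∣ q) (hz : 0 < z) (hzq : 2 * z ≤ q + 1) :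
    IsMixedRZG (layerGraph q p z) 2 z (p + 1) :=
  ⟨layerGraph_card_edge (by have : 1 < p := Fact.out; omega), layerGraph_card_arc hzq,
    ⟨layerGraphCycle q p z hz, rfl⟩, layerGraph_lt_len hpq hq⟩

end LayerGraphCycle

/-- For every odd `g ≥ 5` and `1 ≤ z ≤ (g+1)/2`, there is a `(2,z,g)`-graph with
`g^2 - 1` vertices. -/
theorem f_2_z_g_odd (g z : ℕ) (hg : 5 ≤ g) (hgo : Odd g) (hz1 : 1 ≤ z)
    (hzg : z ≤ (g + 1) / 2) :
    (∃ (V : Type) (_ : Fintype V) (G : MixedGraph V),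
      Nat.card V = g ^ 2 - 1 ∧ IsMixedRZG G 2 z g) := by
  have : Fact (1 < g + 1) := ⟨by omega⟩
  have : Fact (1 < g - 1) := ⟨by omega⟩
  refine ⟨_, inferInstance, layerGraph (g + 1) (g - 1) z, ?_, ?_⟩
  · rw [Nat.card_prod, Nat.card_zmod, Nat.card_zmod, ← Nat.sq_sub_sq, one_pow]
  · convert layerGraph_isMixedRZG (q := g + 1) (p := g - 1) (by omega)
      (even_iff_two_dvd.mp hgo.add_one) hz1 (by omega)
    omega
end
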